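/- Let (H, A, C) be a weak Doi-Koppinen datum over a weak Hopf algebra H with bijective antipode, viewed as a Doi-Koppinen datum over R = Im(Π^L). Then the A-coring 𝒞̃ = { Σ_i 1_{<-1>}·c^i ⊗ 1_{<0>} a^i : a^i ∈ A, c^i ∈ C } ⊆ C ⊗ A (with coproduct and counit restricted from Δ_C ⊗ A and ε_C ⊗ A) is isomorphic as an A-coring to 𝒞 = C ⊗_R A, via θ(c ⊗_R a) = 1_{<-1>}·c ⊗ 1_{<0>} a with inverse induced by the canonical projection C ⊗ A → C ⊗_R A. -/

import Mathlib

open TensorProduct LinearMap MulOpposite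

noncomputable section
namespace DK

variable (k : Type*) [CommRing k] (H : Type*) [Ring H] [Algebra k H]

/-- Given `u = Σ xᵢ ⊗ bᵢ ∈ H ⊗ B` and `ε : H → k`, the linear map `g ↦ Σ ε(xᵢ * g) • bᵢ`. -/
def coPi (B : Type*) [AddCommGroup B] [Module k B] (ε : H →ₗ[k] k) (u : H ⊗[k] B) :
    H →ₗ[k] B :=
  ((TensorProduct.lid k B).toLinearMap
      ∘ₗ LinearMap.rTensor B (ε ∘ₗ LinearMap.mul' k H)
      ∘ₗ (TensorProduct.assoc k H H B).symm.toLinearMap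
      ∘ₗ LinearMap.lTensor H (TensorProduct.comm k B H).toLinearMap
      ∘ₗ (TensorProduct.assoc k H B H).toLinearMap)
    ∘ₗ TensorProduct.mk k (H ⊗[k] B) H u

/-- Given `u = Σ bᵢ ⊗ xᵢ ∈ B ⊗ H` and `ε : H → k`, the linear map `g ↦ Σ ε(g * xᵢ) • bᵢ`. -/
def coPiR (B : Type*) [AddCommGroup B] [Module k B] (ε : H →ₗ[k] k) (u : B ⊗[k] H) :
    H →ₗ[k] B :=
  ((TensorProduct.rid k B).toLinearMap
      ∘ₗ LinearMap.lTensor B (ε ∘ₗ LinearMap.mul' k H ∘ₗ (TensorProduct.comm k H H).toLinearMap)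
      ∘ₗ (TensorProduct.assoc k B H H).toLinearMap)
    ∘ₗ TensorProduct.mk k (B ⊗[k] H) H u

variable (Δ : H →ₗ[k] H ⊗[k] H) (ε : H →ₗ[k] k)

/-- `Π^L(g) = ε(1₍₁₎ g) • 1₍₂₎`. -/
def PiL : H →ₗ[k] H := coPi k H H ε (Δ 1)

/-- `Π^R(g) = ε(g 1₍₂₎) • 1₍₁₎`. -/
def PiR : H →ₗ[k] H := coPiR k H H ε (Δ 1)

/-- the map `h₍₁₎ ε(g h₍₂₎)` as a function of the input of `Δ`, i.e.
`u = Σ aᵢ ⊗ bᵢ ↦ Σ ε(g bᵢ) • aᵢ`. -/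
def PiRmap (g : H) : H ⊗[k] H →ₗ[k] H :=
  (TensorProduct.rid k H).toLinearMap ∘ₗ LinearMap.lTensor H (ε ∘ₗ LinearMap.mulLeft k g)

/-- `(a ⊗ b) ↦ ε(x a) * ε(b z)`. -/
def eps2 (x z : H) : H ⊗[k] H →ₗ[k] k :=
  (TensorProduct.lid k k).toLinearMap
    ∘ₗ TensorProduct.map (ε ∘ₗ LinearMap.mulLeft k x) (ε ∘ₗ LinearMap.mulRight k z)

/-- `(a ⊗ b) ↦ ε(a z) * ε(x b)`. -/
def eps2' (x z : H) : H ⊗[k] H →ₗ[k] k :=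
  (TensorProduct.lid k k).toLinearMap
    ∘ₗ TensorProduct.map (ε ∘ₗ LinearMap.mulRight k z) (ε ∘ₗ LinearMap.mulLeft k x)

/-- The weak bialgebra axioms for `(H, ·, Δ, ε)`: `Δ` is a multiplicative coassociative
counital coproduct, the weak counit axiom
`ε(xyz) = ε(x y₍₁₎) ε(y₍₂₎ z) = ε(x y₍₂₎) ε(y₍₁₎ z)` holds, and the weak unit axiom
`(Δ ⊗ id)Δ(1) = (Δ(1) ⊗ 1)(1 ⊗ Δ(1)) = (1 ⊗ Δ(1))(Δ(1) ⊗ 1)` holds. -/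
def IsWeakBialgebra : Prop :=
  (∀ x y : H, Δ (x * y) = Δ x * Δ y) ∧
  (∀ h : H, (TensorProduct.assoc k H H H) ((LinearMap.rTensor H Δ) (Δ h)) =
      (LinearMap.lTensor H Δ) (Δ h)) ∧
  (∀ h : H, (TensorProduct.lid k H) ((LinearMap.rTensor H ε) (Δ h)) = h) ∧
  (∀ h : H, (TensorProduct.rid k H) ((LinearMap.lTensor H ε) (Δ h)) = h) ∧
  (∀ x y z : H, ε (x * y * z) = eps2 k H ε x z (Δ y)) ∧
  (∀ x y z : H, ε (x * y * z) = eps2' k H ε x z (Δ y)) ∧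
  ((LinearMap.lTensor H Δ) (Δ 1) =
      (TensorProduct.assoc k H H H) ((Δ 1) ⊗ₜ[k] (1 : H)) * ((1 : H) ⊗ₜ[k] (Δ 1))) ∧
  ((LinearMap.lTensor H Δ) (Δ 1) =
      ((1 : H) ⊗ₜ[k] (Δ 1)) * (TensorProduct.assoc k H H H) ((Δ 1) ⊗ₜ[k] (1 : H)))

variable (S : H →ₗ[k] H)

/-- The weak Hopf algebra axioms: `H` is a weak bialgebra with antipode `S` satisfying
`h₍₁₎ S(h₍₂₎) = Π^L(h)`, `S(h₍₁₎) h₍₂₎ = Π^R(h)` and `S(h₍₁₎) h₍₂₎ S(h₍₃₎) = S(h)`. -/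
def IsWeakHopf : Prop :=
  IsWeakBialgebra k H Δ ε ∧
  (∀ h : H, LinearMap.mul' k H ((LinearMap.lTensor H S) (Δ h)) = PiL k H Δ ε h) ∧
  (∀ h : H, LinearMap.mul' k H ((LinearMap.rTensor H S) (Δ h)) = PiR k H Δ ε h) ∧
  (∀ h : H,
    (LinearMap.mul' k H ∘ₗ LinearMap.lTensor H (LinearMap.mul' k H))
        ((TensorProduct.map S (TensorProduct.map LinearMap.id S))
          ((LinearMap.lTensor H Δ) (Δ h))) = S h)

end DK
end
noncomputable section
namespace DK
open TensorProduct LinearMap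

variable (k : Type*) [CommRing k] (H : Type*) [Ring H] [Algebra k H]
  (Δ : H →ₗ[k] H ⊗[k] H) (ε : H →ₗ[k] k)
  (C : Type*) [AddCommGroup C] [Module k C]
  (act : H →ₗ[k] C →ₗ[k] C) (ΔC : C →ₗ[k] C ⊗[k] C) (εC : C →ₗ[k] k)

/-- Evaluation `H ⊗ C → C` of the action. -/
def evC : H ⊗[k] C →ₗ[k] C := TensorProduct.lift act

/-- Diagonal action `(g ⊗ g') ⊗ (c ⊗ c') ↦ g·c ⊗ g'·c'`. -/
def Psi2 : (H ⊗[k] H) ⊗[k] (C ⊗[k] C) →ₗ[k] C ⊗[k] C :=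
  TensorProduct.map (evC k H C act) (evC k H C act) ∘ₗ
    (TensorProduct.tensorTensorTensorComm k H H C C).toLinearMap

/-- `C` is a left weak `H`-module coalgebra: a `k`-coalgebra with a left `H`-action such
that `Δ_C(h·c) = h₍₁₎·c₍₁₎ ⊗ h₍₂₎·c₍₂₎` and `ε_C(hg·c) = ε_H(h g₍₂₎) ε_C(g₍₁₎·c)`. -/
def IsWeakModuleCoalgebra : Prop :=
  (∀ c : C, (TensorProduct.assoc k C C C) ((LinearMap.rTensor C ΔC) (ΔC c)) =
      (LinearMap.lTensor C ΔC) (ΔC c)) ∧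
  (∀ c : C, (TensorProduct.lid k C) ((LinearMap.rTensor C εC) (ΔC c)) = c) ∧
  (∀ c : C, (TensorProduct.rid k C) ((LinearMap.lTensor C εC) (ΔC c)) = c) ∧
  (∀ (g h : H) (c : C), act (g * h) c = act g (act h c)) ∧
  (∀ c : C, act 1 c = c) ∧
  (∀ (h : H) (c : C), ΔC (act h c) = (Psi2 k H C act) ((Δ h) ⊗ₜ[k] (ΔC c))) ∧
  (∀ (h g : H) (c : C), εC (act (h * g) c) =
    (TensorProduct.lid k k)
      ((TensorProduct.map (εC ∘ₗ act.flip c) (ε ∘ₗ LinearMap.mulLeft k h)) (Δ g)))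

/-- The counit `ε̃_C : C → R ⊆ H`, `c ↦ ε_C(1₍₁₎ · c) 1₍₂₎`. -/
def etil : C →ₗ[k] H :=
  ((TensorProduct.lid k H).toLinearMap
      ∘ₗ LinearMap.rTensor H (εC ∘ₗ evC k H C act)
      ∘ₗ (TensorProduct.assoc k H C H).symm.toLinearMap
      ∘ₗ LinearMap.lTensor H (TensorProduct.comm k H C).toLinearMap
      ∘ₗ (TensorProduct.assoc k H H C).toLinearMap)
    ∘ₗ TensorProduct.mk k (H ⊗[k] H) C (Δ 1)

end DK
end
noncomputable section
namespace DK
open TensorProduct LinearMap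

variable (k : Type*) [CommRing k] (H : Type*) [Ring H] [Algebra k H]
  (Δ : H →ₗ[k] H ⊗[k] H) (ε : H →ₗ[k] k)
  (A : Type*) [Ring A] [Algebra k A] (ρ : A →ₗ[k] H ⊗[k] A)

/-- `1₂ ⊗ (1₋₁ ⊗ 1₀) ↦ 1₋₁ 1₂ ⊗ 1₀` (used in the weak unit axiom). -/
def innerW : H ⊗[k] (H ⊗[k] A) →ₗ[k] H ⊗[k] A :=
  LinearMap.rTensor A (LinearMap.mul' k H ∘ₗ (TensorProduct.comm k H H).toLinearMap) ∘ₗ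
    (TensorProduct.assoc k H H A).symm.toLinearMap

/-- `(A, ρ)` is a left weak `H`-comodule algebra: a coassociative counital left
`H`-comodule and an algebra with `ρ(a)ρ(b) = ρ(ab)` and
`(H ⊗ ρ)ρ(1) = 1₍₁₎ ⊗ 1₍₋₁₎1₍₂₎ ⊗ 1₍₀₎`. -/
def IsWeakComoduleAlgebra : Prop :=
  (∀ a : A, (TensorProduct.assoc k H H A) ((LinearMap.rTensor A Δ) (ρ a)) =
      (LinearMap.lTensor H ρ) (ρ a)) ∧
  (∀ a : A, (TensorProduct.lid k A) ((LinearMap.rTensor A ε) (ρ a)) = a) ∧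
  (∀ a b : A, ρ (a * b) = ρ a * ρ b) ∧
  ((LinearMap.lTensor H ρ) (ρ 1) =
    (LinearMap.lTensor H (innerW k H A))
      ((TensorProduct.assoc k H H (H ⊗[k] A)) ((Δ 1) ⊗ₜ[k] (ρ 1))))

/-- The source map `s_A : h ↦ ε(1₍₋₁₎ h) 1₍₀₎`, i.e. `s_A(Π^L h) = ε(1₍₋₁₎ h) 1₍₀₎`. -/
def sAlin : H →ₗ[k] A := coPi k H A ε (ρ 1)

end DK
end
noncomputable section Helpers
namespace DKP
open TensorProduct LinearMap

variable {k : Type*} [CommRing k] {H : Type*} [Ring H] [Algebra k H]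
variable {B : Type*} [AddCommGroup B] [Module k B]

lemma coPi_tmul (ε : H →ₗ[k] k) (p : H) (b : B) (g : H) :
    DK.coPi k H B ε (p ⊗ₜ[k] b) g = ε (p * g) • b := by
  simp [DK.coPi]

lemma coPiR_tmul (ε : H →ₗ[k] k) (b : B) (p : H) (g : H) :
    DK.coPiR k H B ε (b ⊗ₜ[k] p) g = ε (g * p) • b := by
  simp [DK.coPiR]

lemma coPi_zero (ε : H →ₗ[k] k) (g : H) : DK.coPi k H B ε 0 g = 0 := by
  simp [DK.coPi, zero_tmul]

lemma coPi_add (ε : H →ₗ[k] k) (u v : H ⊗[k] B) (g : H) :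
    DK.coPi k H B ε (u + v) g = DK.coPi k H B ε u g + DK.coPi k H B ε v g := by
  simp [DK.coPi, add_tmul]

lemma coPiR_zero (ε : H →ₗ[k] k) (g : H) : DK.coPiR k H B ε 0 g = 0 := by
  simp [DK.coPiR, zero_tmul]

lemma coPiR_add (ε : H →ₗ[k] k) (u v : B ⊗[k] H) (g : H) :
    DK.coPiR k H B ε (u + v) g = DK.coPiR k H B ε u g + DK.coPiR k H B ε v g := by
  simp [DK.coPiR, add_tmul]

lemma coPi_zero' (ε : H →ₗ[k] k) : DK.coPi k H B ε 0 = 0 :=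
  LinearMap.ext fun g => coPi_zero ε g

lemma coPi_add' (ε : H →ₗ[k] k) (u v : H ⊗[k] B) :
    DK.coPi k H B ε (u + v) = DK.coPi k H B ε u + DK.coPi k H B ε v :=
  LinearMap.ext fun g => coPi_add ε u v g

lemma coPiR_zero' (ε : H →ₗ[k] k) : DK.coPiR k H B ε 0 = 0 :=
  LinearMap.ext fun g => coPiR_zero ε g

lemma coPiR_add' (ε : H →ₗ[k] k) (u v : B ⊗[k] H) :
    DK.coPiR k H B ε (u + v) = DK.coPiR k H B ε u + DK.coPiR k H B ε v :=
  LinearMap.ext fun g => coPiR_add ε u v g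

lemma eps2'_tmul (ε : H →ₗ[k] k) (x z p q : H) :
    DK.eps2' k H ε x z (p ⊗ₜ[k] q) = ε (p * z) * ε (x * q) := by
  simp [DK.eps2']

end DKP
end Helpers
noncomputable section Helpers2
namespace DKP
open TensorProduct LinearMap

variable {k : Type*} [CommRing k] {H : Type*} [Ring H] [Algebra k H]
variable (Δ : H →ₗ[k] H ⊗[k] H) (ε : H →ₗ[k] k) (S : H →ₗ[k] H)

/-- L1 : `ε(PQ) = Σ ε(P 1₂) ε(1₁ Q)`. -/
lemma eps_mul (hε2' : ∀ x y z : H, ε (x * y * z) = DK.eps2' k H ε x z (Δ y))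
    (P Q : H) : ε (P * Q) = DK.eps2' k H ε P Q (Δ 1) := by
  have := hε2' P 1 Q
  rwa [mul_one] at this

/-- T1b : `ε(x Π^L(y)) = ε(x y)`. -/
lemma eps_mul_piL (hε2' : ∀ x y z : H, ε (x * y * z) = DK.eps2' k H ε x z (Δ y))
    (x y : H) : ε (x * DK.PiL k H Δ ε y) = ε (x * y) := by
  have aux : ∀ u : H ⊗[k] H, ε (x * DK.coPi k H H ε u y) = DK.eps2' k H ε x y u := by
    intro u
    refine TensorProduct.induction_on u ?_ ?_ ?_
    · simp [coPi_zero]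
    · intro p q
      rw [coPi_tmul, eps2'_tmul, mul_smul_comm, map_smul, smul_eq_mul]
    · intro a b ha hb
      rw [coPi_add, mul_add, map_add, map_add, ha, hb]
  rw [DK.PiL, aux, ← eps_mul Δ ε hε2']

/-- `coPi u ∘ Π^L = coPi u`. -/
lemma coPi_piL {B : Type*} [AddCommGroup B] [Module k B]
    (hε2' : ∀ x y z : H, ε (x * y * z) = DK.eps2' k H ε x z (Δ y))
    (u : H ⊗[k] B) (g : H) :
    DK.coPi k H B ε u (DK.PiL k H Δ ε g) = DK.coPi k H B ε u g := by
  refine TensorProduct.induction_on u ?_ ?_ ?_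
  · simp [coPi_zero]
  · intro p b
    rw [coPi_tmul, coPi_tmul, eps_mul_piL Δ ε hε2']
  · intro a b ha hb
    rw [coPi_add, coPi_add, ha, hb]

lemma piL_one (hcu1 : ∀ h : H, (TensorProduct.lid k H) ((LinearMap.rTensor H ε) (Δ h)) = h) :
    DK.PiL k H Δ ε 1 = 1 := by
  have aux : ∀ u : H ⊗[k] H, DK.coPi k H H ε u 1 =
      (TensorProduct.lid k H) ((LinearMap.rTensor H ε) u) := by
    intro u
    refine TensorProduct.induction_on u ?_ ?_ ?_
    · simp [coPi_zero]
    · intro p q; rw [coPi_tmul, mul_one]; simp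
    · intro a b ha hb; rw [coPi_add, map_add, map_add, ha, hb]
  rw [DK.PiL, aux, hcu1]

lemma piR_one (hcu2 : ∀ h : H, (TensorProduct.rid k H) ((LinearMap.lTensor H ε) (Δ h)) = h) :
    DK.PiR k H Δ ε 1 = 1 := by
  have aux : ∀ u : H ⊗[k] H, DK.coPiR k H H ε u 1 =
      (TensorProduct.rid k H) ((LinearMap.lTensor H ε) u) := by
    intro u
    refine TensorProduct.induction_on u ?_ ?_ ?_
    · simp [coPiR_zero]
    · intro p q; rw [coPiR_tmul, one_mul]; simp
    · intro a b ha hb; rw [coPiR_add, map_add, map_add, ha, hb]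
  rw [DK.PiR, aux, hcu2]

end DKP
end Helpers2
noncomputable section Helpers3
namespace DKP
open TensorProduct LinearMap

set_option synthInstance.maxHeartbeats 1000000
set_option maxHeartbeats 1000000

variable {k : Type*} [CommRing k] {H : Type*} [Ring H] [Algebra k H]
variable (Δ : H →ₗ[k] H ⊗[k] H) (ε : H →ₗ[k] k) (S : H →ₗ[k] H)

/-- T5a : `S(h) = Σ S(h₁) Π^L(h₂)`. -/
lemma S_map_piL
    (hSL : ∀ h : H, LinearMap.mul' k H ((LinearMap.lTensor H S) (Δ h)) = DK.PiL k H Δ ε h)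
    (hSS : ∀ h : H,
      (LinearMap.mul' k H ∘ₗ LinearMap.lTensor H (LinearMap.mul' k H))
        ((TensorProduct.map S (TensorProduct.map LinearMap.id S))
          ((LinearMap.lTensor H Δ) (Δ h))) = S h)
    (h : H) :
    LinearMap.mul' k H (TensorProduct.map S (DK.PiL k H Δ ε) (Δ h)) = S h := by
  have aux : ∀ u : H ⊗[k] H,
      (LinearMap.mul' k H ∘ₗ LinearMap.lTensor H (LinearMap.mul' k H))
        ((TensorProduct.map S (TensorProduct.map LinearMap.id S))
          ((LinearMap.lTensor H Δ) u)) =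
      LinearMap.mul' k H (TensorProduct.map S (DK.PiL k H Δ ε) u) := by
    intro u
    refine TensorProduct.induction_on u ?_ ?_ ?_
    · simp
    · intro p q
      have hid : (TensorProduct.map (LinearMap.id) S : H ⊗[k] H →ₗ[k] H ⊗[k] H)
          = LinearMap.lTensor H S := rfl
      simp only [lTensor_tmul, map_tmul, LinearMap.comp_apply, mul'_apply, hid, hSL q]
    · intro a b ha hb
      simp only [map_add, ha, hb]
  rw [← hSS h, aux]

/-- T5b : `S(h) = Σ Π^R(h₁) S(h₂)`. -/
lemma piR_map_S
    (hco : ∀ h : H, (TensorProduct.assoc k H H H) ((LinearMap.rTensor H Δ) (Δ h)) =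
      (LinearMap.lTensor H Δ) (Δ h))
    (hSR : ∀ h : H, LinearMap.mul' k H ((LinearMap.rTensor H S) (Δ h)) = DK.PiR k H Δ ε h)
    (hSS : ∀ h : H,
      (LinearMap.mul' k H ∘ₗ LinearMap.lTensor H (LinearMap.mul' k H))
        ((TensorProduct.map S (TensorProduct.map LinearMap.id S))
          ((LinearMap.lTensor H Δ) (Δ h))) = S h)
    (h : H) :
    LinearMap.mul' k H (TensorProduct.map (DK.PiR k H Δ ε) S (Δ h)) = S h := by
  have auxTot : ∀ w : (H ⊗[k] H) ⊗[k] H,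
      (LinearMap.mul' k H ∘ₗ LinearMap.lTensor H (LinearMap.mul' k H))
        ((TensorProduct.map S (TensorProduct.map LinearMap.id S))
          ((TensorProduct.assoc k H H H) w)) =
      LinearMap.mul' k H
        (TensorProduct.map (LinearMap.mul' k H ∘ₗ LinearMap.rTensor H S) S w) := by
    intro w
    refine TensorProduct.induction_on w ?_ ?_ ?_
    · simp
    · intro v q
      refine TensorProduct.induction_on v ?_ ?_ ?_
      · simp [zero_tmul]
      · intro a b
        simp only [assoc_tmul, map_tmul, lTensor_tmul, LinearMap.comp_apply, mul'_apply,
          rTensor_tmul, LinearMap.id_coe, id_eq, mul_assoc]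
      · intro x y hx hy
        simp only [add_tmul, map_add, hx, hy]
    · intro a b ha hb
      simp only [map_add, ha, hb]
  have mapfuse : ∀ u : H ⊗[k] H,
      TensorProduct.map (LinearMap.mul' k H ∘ₗ LinearMap.rTensor H S) S
        ((LinearMap.rTensor H Δ) u) =
      TensorProduct.map ((LinearMap.mul' k H ∘ₗ LinearMap.rTensor H S) ∘ₗ Δ) S u := by
    intro u
    refine TensorProduct.induction_on u ?_ ?_ ?_
    · simp
    · intro p q; simp
    · intro a b ha hb; simp only [map_add, ha, hb]
  have hpt : ((LinearMap.mul' k H ∘ₗ LinearMap.rTensor H S) ∘ₗ Δ) = DK.PiR k H Δ ε := by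
    ext x; simpa using hSR x
  calc LinearMap.mul' k H (TensorProduct.map (DK.PiR k H Δ ε) S (Δ h))
      = LinearMap.mul' k H
          (TensorProduct.map ((LinearMap.mul' k H ∘ₗ LinearMap.rTensor H S) ∘ₗ Δ) S (Δ h)) := by
        rw [hpt]
    _ = LinearMap.mul' k H
          (TensorProduct.map (LinearMap.mul' k H ∘ₗ LinearMap.rTensor H S) S
            ((LinearMap.rTensor H Δ) (Δ h))) := by rw [mapfuse]
    _ = (LinearMap.mul' k H ∘ₗ LinearMap.lTensor H (LinearMap.mul' k H))
          ((TensorProduct.map S (TensorProduct.map LinearMap.id S))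
            ((TensorProduct.assoc k H H H) ((LinearMap.rTensor H Δ) (Δ h)))) :=
        (auxTot _).symm
    _ = S h := by rw [hco h, hSS h]

/-- T22 : `ε(g S(h)) = ε(g Π^R(h))`. -/
lemma eps_S
    (hε2' : ∀ x y z : H, ε (x * y * z) = DK.eps2' k H ε x z (Δ y))
    (hSL : ∀ h : H, LinearMap.mul' k H ((LinearMap.lTensor H S) (Δ h)) = DK.PiL k H Δ ε h)
    (hSR : ∀ h : H, LinearMap.mul' k H ((LinearMap.rTensor H S) (Δ h)) = DK.PiR k H Δ ε h)
    (hSS : ∀ h : H,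
      (LinearMap.mul' k H ∘ₗ LinearMap.lTensor H (LinearMap.mul' k H))
        ((TensorProduct.map S (TensorProduct.map LinearMap.id S))
          ((LinearMap.lTensor H Δ) (Δ h))) = S h)
    (g h : H) : ε (g * S h) = ε (g * DK.PiR k H Δ ε h) := by
  have aux : ∀ u : H ⊗[k] H,
      ε (g * LinearMap.mul' k H (TensorProduct.map S (DK.PiL k H Δ ε) u)) =
      ε (g * LinearMap.mul' k H ((LinearMap.rTensor H S) u)) := by
    intro u
    refine TensorProduct.induction_on u ?_ ?_ ?_
    · simp
    · intro a b
      simp only [map_tmul, mul'_apply, rTensor_tmul]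
      rw [← mul_assoc, eps_mul_piL Δ ε hε2', mul_assoc]
    · intro a b ha hb
      simp only [map_add, mul_add, ha, hb]
  rw [← S_map_piL Δ ε S hSL hSS h, aux, hSR h]

/-- T23 : `Π^L(S h) = Π^L(Π^R h)`. -/
lemma piL_S
    (hε2' : ∀ x y z : H, ε (x * y * z) = DK.eps2' k H ε x z (Δ y))
    (hSL : ∀ h : H, LinearMap.mul' k H ((LinearMap.lTensor H S) (Δ h)) = DK.PiL k H Δ ε h)
    (hSR : ∀ h : H, LinearMap.mul' k H ((LinearMap.rTensor H S) (Δ h)) = DK.PiR k H Δ ε h)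
    (hSS : ∀ h : H,
      (LinearMap.mul' k H ∘ₗ LinearMap.lTensor H (LinearMap.mul' k H))
        ((TensorProduct.map S (TensorProduct.map LinearMap.id S))
          ((LinearMap.lTensor H Δ) (Δ h))) = S h)
    (h : H) : DK.PiL k H Δ ε (S h) = DK.PiL k H Δ ε (DK.PiR k H Δ ε h) := by
  have aux : ∀ u : H ⊗[k] H,
      DK.coPi k H H ε u (S h) = DK.coPi k H H ε u (DK.PiR k H Δ ε h) := by
    intro u
    refine TensorProduct.induction_on u ?_ ?_ ?_
    · simp [coPi_zero]
    · intro p q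
      rw [coPi_tmul, coPi_tmul, eps_S Δ ε S hε2' hSL hSR hSS]
    · intro a b ha hb
      rw [coPi_add, coPi_add, ha, hb]
  exact aux (Δ 1)

end DKP
end Helpers3
noncomputable section Helpers4
namespace DKP
open TensorProduct LinearMap

set_option synthInstance.maxHeartbeats 1000000
set_option maxHeartbeats 1000000

variable {k : Type*} [CommRing k] {H : Type*} [Ring H] [Algebra k H]
variable (Δ : H →ₗ[k] H ⊗[k] H) (ε : H →ₗ[k] k) (S : H →ₗ[k] H)

lemma assocLin_mul (u v : (H ⊗[k] H) ⊗[k] H) :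
    (TensorProduct.assoc k H H H) (u * v) =
      (TensorProduct.assoc k H H H) u * (TensorProduct.assoc k H H H) v := by
  have h1 : ∀ x : (H ⊗[k] H) ⊗[k] H,
      (TensorProduct.assoc k H H H) x = Algebra.TensorProduct.assoc k k k H H H x := fun _ => rfl
  rw [h1, h1, h1, map_mul]

/-- `Ω((1 ⊗ u)·(v ⊗ 1)) = (id ⊗ coPi u)(v)` where `Ω` contracts the two middle legs. -/
lemma omega_mulform2 (u v : H ⊗[k] H) :
    LinearMap.lTensor H ((TensorProduct.lid k H).toLinearMap ∘ₗ LinearMap.rTensor H ε)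
        (((1 : H) ⊗ₜ[k] u) * ((TensorProduct.assoc k H H H) (v ⊗ₜ[k] (1 : H)))) =
      LinearMap.lTensor H (DK.coPi k H H ε u) v := by
  refine TensorProduct.induction_on v ?_ ?_ ?_
  · simp [zero_tmul]
  · intro a b
    refine TensorProduct.induction_on u ?_ ?_ ?_
    · simp [coPi_zero, tmul_zero]
    · intro c d
      simp only [assoc_tmul, Algebra.TensorProduct.tmul_mul_tmul, one_mul, mul_one,
        lTensor_tmul, LinearMap.comp_apply, rTensor_tmul, lid_tmul, coPi_tmul,
        LinearEquiv.coe_coe, LinearMap.mul'_apply]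
    · intro x y hx hy
      have : (1 : H) ⊗ₜ[k] (x + y) = (1:H) ⊗ₜ[k] x + (1:H) ⊗ₜ[k] y := tmul_add _ _ _
      rw [this, add_mul, map_add, hx, hy]
      simp only [lTensor_tmul, coPi_add, tmul_add]
  · intro x y hx hy
    rw [add_tmul, map_add, mul_add, map_add, hx, hy, map_add]

lemma omega_lTensor_delta
    (hcu1 : ∀ h : H, (TensorProduct.lid k H) ((LinearMap.rTensor H ε) (Δ h)) = h)
    (x : H ⊗[k] H) :
    LinearMap.lTensor H ((TensorProduct.lid k H).toLinearMap ∘ₗ LinearMap.rTensor H ε)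
      ((LinearMap.lTensor H Δ) x) = x := by
  rw [← LinearMap.comp_apply, ← lTensor_comp]
  have : (((TensorProduct.lid k H).toLinearMap ∘ₗ LinearMap.rTensor H ε) ∘ₗ Δ)
      = LinearMap.id := by
    ext y; simpa using hcu1 y
  rw [this, lTensor_id, LinearMap.id_apply]

/-- M1 : `Σ 1₁ ⊗ Π^L(1₂) = Δ(1)`. -/
lemma M1
    (hcu1 : ∀ h : H, (TensorProduct.lid k H) ((LinearMap.rTensor H ε) (Δ h)) = h)
    (hw2 : (LinearMap.lTensor H Δ) (Δ 1) =
      ((1 : H) ⊗ₜ[k] (Δ 1)) * (TensorProduct.assoc k H H H) ((Δ 1) ⊗ₜ[k] (1 : H))) :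
    LinearMap.lTensor H (DK.PiL k H Δ ε) (Δ 1) = Δ 1 := by
  calc LinearMap.lTensor H (DK.PiL k H Δ ε) (Δ 1)
      = LinearMap.lTensor H ((TensorProduct.lid k H).toLinearMap ∘ₗ LinearMap.rTensor H ε)
          (((1 : H) ⊗ₜ[k] (Δ 1)) * ((TensorProduct.assoc k H H H) ((Δ 1) ⊗ₜ[k] (1 : H)))) :=
        (omega_mulform2 ε (Δ 1) (Δ 1)).symm
    _ = LinearMap.lTensor H ((TensorProduct.lid k H).toLinearMap ∘ₗ LinearMap.rTensor H ε)
          ((LinearMap.lTensor H Δ) (Δ 1)) := by rw [← hw2]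
    _ = Δ 1 := omega_lTensor_delta Δ ε hcu1 _

/-- M3 : `Σ Π^R(1₁) ⊗ 1₂ = Δ(1)`. -/
lemma M3
    (hco : ∀ h : H, (TensorProduct.assoc k H H H) ((LinearMap.rTensor H Δ) (Δ h)) =
      (LinearMap.lTensor H Δ) (Δ h))
    (hcu2 : ∀ h : H, (TensorProduct.rid k H) ((LinearMap.lTensor H ε) (Δ h)) = h)
    (hw1 : (LinearMap.lTensor H Δ) (Δ 1) =
      (TensorProduct.assoc k H H H) ((Δ 1) ⊗ₜ[k] (1 : H)) * ((1 : H) ⊗ₜ[k] (Δ 1)))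
    (hSR : ∀ h : H, LinearMap.mul' k H ((LinearMap.rTensor H S) (Δ h)) = DK.PiR k H Δ ε h) :
    LinearMap.rTensor H (DK.PiR k H Δ ε) (Δ 1) = Δ 1 := by
  have hPiRfac : DK.PiR k H Δ ε = (LinearMap.mul' k H ∘ₗ LinearMap.rTensor H S) ∘ₗ Δ := by
    ext x; simpa using (hSR x).symm
  have hsymm : (LinearMap.rTensor H Δ) (Δ 1)
      = (TensorProduct.assoc k H H H).symm ((LinearMap.lTensor H Δ) (Δ 1)) := by
    rw [← hco 1, LinearEquiv.symm_apply_apply]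
  have M3aux : ∀ u v : H ⊗[k] H,
      LinearMap.rTensor H (LinearMap.mul' k H ∘ₗ LinearMap.rTensor H S)
        ((TensorProduct.assoc k H H H).symm
          (((TensorProduct.assoc k H H H) (v ⊗ₜ[k] (1 : H))) * ((1 : H) ⊗ₜ[k] u))) =
      LinearMap.rTensor H (LinearMap.mulLeft k (LinearMap.mul' k H
        ((LinearMap.rTensor H S) v))) u := by
    intro u v
    refine TensorProduct.induction_on u ?_ ?_ ?_
    · simp [tmul_zero]
    · intro c d
      refine TensorProduct.induction_on v ?_ ?_ ?_
      · simp [zero_tmul]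
      · intro a b
        simp only [assoc_tmul, Algebra.TensorProduct.tmul_mul_tmul, one_mul, mul_one,
          assoc_symm_tmul, rTensor_tmul, LinearMap.comp_apply, mul'_apply,
          LinearMap.mulLeft_apply, mul_assoc]
      · intro x y hx hy
        simp only [add_tmul, map_add, add_mul, LinearMap.mulLeft_apply] at hx hy ⊢
        rw [hx, hy]
        refine TensorProduct.induction_on (motive := fun w =>
          LinearMap.rTensor H (LinearMap.mulLeft k (LinearMap.mul' k H
            ((LinearMap.rTensor H S) x))) w +
          LinearMap.rTensor H (LinearMap.mulLeft k (LinearMap.mul' k H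
            ((LinearMap.rTensor H S) y))) w =
          LinearMap.rTensor H (LinearMap.mulLeft k (LinearMap.mul' k H
            ((LinearMap.rTensor H S) x) + LinearMap.mul' k H
            ((LinearMap.rTensor H S) y))) w) (c ⊗ₜ[k] d) ?_ ?_ ?_
        · simp
        · intro p q
          simp only [rTensor_tmul, LinearMap.mulLeft_apply, add_mul, ← add_tmul]
        · intro p q hp hq
          simp only [map_add] at hp hq ⊢
          rw [← hp, ← hq]; abel
    · intro x y hx hy
      simp only [tmul_add, mul_add, map_add, hx, hy]
  calc LinearMap.rTensor H (DK.PiR k H Δ ε) (Δ 1)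
      = LinearMap.rTensor H (LinearMap.mul' k H ∘ₗ LinearMap.rTensor H S)
          ((LinearMap.rTensor H Δ) (Δ 1)) := by
        rw [hPiRfac, rTensor_comp, LinearMap.comp_apply]
    _ = LinearMap.rTensor H (LinearMap.mulLeft k (LinearMap.mul' k H
          ((LinearMap.rTensor H S) (Δ 1)))) (Δ 1) := by
        rw [hsymm, hw1, M3aux]
    _ = Δ 1 := by
        rw [hSR 1, piR_one Δ ε hcu2, LinearMap.mulLeft_one, rTensor_id, LinearMap.id_apply]

end DKP
end Helpers4
noncomputable section Helpers5
namespace DKP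
open TensorProduct LinearMap

set_option synthInstance.maxHeartbeats 1000000
set_option maxHeartbeats 1000000

variable {k : Type*} [CommRing k] {H : Type*} [Ring H] [Algebra k H]
variable (Δ : H →ₗ[k] H ⊗[k] H) (ε : H →ₗ[k] k) (S : H →ₗ[k] H)

/-- Fact I1 : `Δ(Π^R g) = Δ(1) (1 ⊗ Π^R g)`. -/
lemma I1
    (hco : ∀ h : H, (TensorProduct.assoc k H H H) ((LinearMap.rTensor H Δ) (Δ h)) =
      (LinearMap.lTensor H Δ) (Δ h))
    (hw1 : (LinearMap.lTensor H Δ) (Δ 1) =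
      (TensorProduct.assoc k H H H) ((Δ 1) ⊗ₜ[k] (1 : H)) * ((1 : H) ⊗ₜ[k] (Δ 1)))
    (g : H) :
    Δ (DK.PiR k H Δ ε g) = Δ 1 * ((1 : H) ⊗ₜ[k] DK.PiR k H Δ ε g) := by
  have I1a : ∀ u : H ⊗[k] H,
      Δ (DK.coPiR k H H ε u g) =
      ((TensorProduct.rid k (H ⊗[k] H)).toLinearMap
        ∘ₗ LinearMap.lTensor (H ⊗[k] H) (ε ∘ₗ LinearMap.mulLeft k g))
        ((LinearMap.rTensor H Δ) u) := by
    intro u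
    refine TensorProduct.induction_on u ?_ ?_ ?_
    · simp [coPiR_zero]
    · intro b p
      rw [coPiR_tmul]
      simp
    · intro x y hx hy
      rw [coPiR_add, map_add, map_add, map_add, hx, hy]
  have I1b : ∀ u v : H ⊗[k] H,
      ((TensorProduct.rid k (H ⊗[k] H)).toLinearMap
        ∘ₗ LinearMap.lTensor (H ⊗[k] H) (ε ∘ₗ LinearMap.mulLeft k g))
        ((TensorProduct.assoc k H H H).symm
          (((TensorProduct.assoc k H H H) (v ⊗ₜ[k] (1 : H))) * ((1 : H) ⊗ₜ[k] u))) =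
      v * ((1 : H) ⊗ₜ[k] DK.coPiR k H H ε u g) := by
    intro u v
    refine TensorProduct.induction_on v ?_ ?_ ?_
    · simp [zero_tmul]
    · intro a b
      refine TensorProduct.induction_on u ?_ ?_ ?_
      · simp [coPiR_zero, tmul_zero]
      · intro c d
        simp only [assoc_tmul, Algebra.TensorProduct.tmul_mul_tmul, one_mul, mul_one,
          assoc_symm_tmul, LinearMap.comp_apply, lTensor_tmul, LinearEquiv.coe_coe,
          rid_tmul, LinearMap.mulLeft_apply, coPiR_tmul, tmul_smul, mul_smul_comm]
      · intro x y hx hy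
        have h1 : (1 : H) ⊗ₜ[k] (x + y) = (1:H) ⊗ₜ[k] x + (1:H) ⊗ₜ[k] y := tmul_add _ _ _
        rw [h1]
        simp only [mul_add, map_add, hx, hy, coPiR_add, tmul_add]
    · intro x y hx hy
      simp only [add_tmul, map_add, add_mul, hx, hy]
  have hsymm : (LinearMap.rTensor H Δ) (Δ 1)
      = (TensorProduct.assoc k H H H).symm ((LinearMap.lTensor H Δ) (Δ 1)) := by
    rw [← hco 1, LinearEquiv.symm_apply_apply]
  calc Δ (DK.PiR k H Δ ε g)
      = ((TensorProduct.rid k (H ⊗[k] H)).toLinearMap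
          ∘ₗ LinearMap.lTensor (H ⊗[k] H) (ε ∘ₗ LinearMap.mulLeft k g))
          ((LinearMap.rTensor H Δ) (Δ 1)) := I1a (Δ 1)
    _ = Δ 1 * ((1 : H) ⊗ₜ[k] DK.coPiR k H H ε (Δ 1) g) := by
        rw [hsymm, hw1]; exact I1b (Δ 1) (Δ 1)
    _ = Δ 1 * ((1 : H) ⊗ₜ[k] DK.PiR k H Δ ε g) := rfl

/-- `Ω(assoc(rTensor Δ w)) = w`. -/
lemma omega_assoc_rT
    (hcu2 : ∀ h : H, (TensorProduct.rid k H) ((LinearMap.lTensor H ε) (Δ h)) = h)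
    (w : H ⊗[k] H) :
    LinearMap.lTensor H ((TensorProduct.lid k H).toLinearMap ∘ₗ LinearMap.rTensor H ε)
      ((TensorProduct.assoc k H H H) ((LinearMap.rTensor H Δ) w)) = w := by
  have aux : ∀ (v : H ⊗[k] H) (q : H),
      LinearMap.lTensor H ((TensorProduct.lid k H).toLinearMap ∘ₗ LinearMap.rTensor H ε)
        ((TensorProduct.assoc k H H H) (v ⊗ₜ[k] q)) =
      ((TensorProduct.rid k H) ((LinearMap.lTensor H ε) v)) ⊗ₜ[k] q := by
    intro v q
    refine TensorProduct.induction_on v ?_ ?_ ?_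
    · simp [zero_tmul]
    · intro a b
      simp [smul_tmul, tmul_smul]
    · intro x y hx hy
      rw [add_tmul, map_add, map_add, hx, hy, map_add, map_add, add_tmul]
  refine TensorProduct.induction_on w ?_ ?_ ?_
  · simp
  · intro p q
    rw [rTensor_tmul, aux, hcu2]
  · intro x y hx hy
    rw [map_add, map_add, map_add, hx, hy]

/-- T18' : `Σ h₁ ⊗ Π^L(h₂) = Δ(1)(h ⊗ 1)`. -/
lemma T18
    (hΔm : ∀ x y : H, Δ (x * y) = Δ x * Δ y)
    (hco : ∀ h : H, (TensorProduct.assoc k H H H) ((LinearMap.rTensor H Δ) (Δ h)) =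
      (LinearMap.lTensor H Δ) (Δ h))
    (hcu2 : ∀ h : H, (TensorProduct.rid k H) ((LinearMap.lTensor H ε) (Δ h)) = h)
    (hw2 : (LinearMap.lTensor H Δ) (Δ 1) =
      ((1 : H) ⊗ₜ[k] (Δ 1)) * (TensorProduct.assoc k H H H) ((Δ 1) ⊗ₜ[k] (1 : H)))
    (h : H) :
    LinearMap.lTensor H (DK.PiL k H Δ ε) (Δ h) = Δ 1 * (h ⊗ₜ[k] (1 : H)) := by
  have rdmul : ∀ u : H ⊗[k] H,
      (LinearMap.rTensor H Δ) u * ((Δ h) ⊗ₜ[k] (1 : H)) =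
      (LinearMap.rTensor H Δ) (u * (h ⊗ₜ[k] (1 : H))) := by
    intro u
    refine TensorProduct.induction_on u ?_ ?_ ?_
    · simp
    · intro a b
      simp only [rTensor_tmul, Algebra.TensorProduct.tmul_mul_tmul, mul_one, ← hΔm]
    · intro x y hx hy
      rw [map_add, add_mul, hx, hy, add_mul, map_add]
  have key : (LinearMap.lTensor H Δ) (Δ 1) * (TensorProduct.assoc k H H H) ((Δ h) ⊗ₜ[k] (1 : H))
      = (TensorProduct.assoc k H H H) ((LinearMap.rTensor H Δ) (Δ 1 * (h ⊗ₜ[k] (1 : H)))) := by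
    rw [← hco 1, ← assocLin_mul, rdmul]
  have key2 : (LinearMap.lTensor H Δ) (Δ 1) * (TensorProduct.assoc k H H H) ((Δ h) ⊗ₜ[k] (1 : H))
      = ((1 : H) ⊗ₜ[k] (Δ 1)) * (TensorProduct.assoc k H H H) ((Δ h) ⊗ₜ[k] (1 : H)) := by
    rw [hw2, mul_assoc, ← assocLin_mul, Algebra.TensorProduct.tmul_mul_tmul, ← hΔm,
      one_mul, mul_one]
  calc LinearMap.lTensor H (DK.PiL k H Δ ε) (Δ h)
      = LinearMap.lTensor H ((TensorProduct.lid k H).toLinearMap ∘ₗ LinearMap.rTensor H ε)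
          (((1 : H) ⊗ₜ[k] (Δ 1)) * ((TensorProduct.assoc k H H H) ((Δ h) ⊗ₜ[k] (1 : H)))) :=
        (omega_mulform2 ε (Δ 1) (Δ h)).symm
    _ = LinearMap.lTensor H ((TensorProduct.lid k H).toLinearMap ∘ₗ LinearMap.rTensor H ε)
          ((TensorProduct.assoc k H H H)
            ((LinearMap.rTensor H Δ) (Δ 1 * (h ⊗ₜ[k] (1 : H))))) := by
        rw [← key2, key]
    _ = Δ 1 * (h ⊗ₜ[k] (1 : H)) := omega_assoc_rT Δ ε hcu2 _

end DKP
end Helpers5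
noncomputable section Helpers6
namespace DKP
open TensorProduct LinearMap

set_option synthInstance.maxHeartbeats 1000000
set_option maxHeartbeats 1000000

variable {k : Type*} [CommRing k] {H : Type*} [Ring H] [Algebra k H]
variable (Δ : H →ₗ[k] H ⊗[k] H) (ε : H →ₗ[k] k) (S : H →ₗ[k] H)

/-- T24 : `S(Π^R h) = Π^L(Π^R h)`. -/
lemma T24
    (hco : ∀ h : H, (TensorProduct.assoc k H H H) ((LinearMap.rTensor H Δ) (Δ h)) =
      (LinearMap.lTensor H Δ) (Δ h))
    (hcu2 : ∀ h : H, (TensorProduct.rid k H) ((LinearMap.lTensor H ε) (Δ h)) = h)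
    (hw1 : (LinearMap.lTensor H Δ) (Δ 1) =
      (TensorProduct.assoc k H H H) ((Δ 1) ⊗ₜ[k] (1 : H)) * ((1 : H) ⊗ₜ[k] (Δ 1)))
    (hSL : ∀ h : H, LinearMap.mul' k H ((LinearMap.lTensor H S) (Δ h)) = DK.PiL k H Δ ε h)
    (hSR : ∀ h : H, LinearMap.mul' k H ((LinearMap.rTensor H S) (Δ h)) = DK.PiR k H Δ ε h)
    (hSS : ∀ h : H,
      (LinearMap.mul' k H ∘ₗ LinearMap.lTensor H (LinearMap.mul' k H))
        ((TensorProduct.map S (TensorProduct.map LinearMap.id S))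
          ((LinearMap.lTensor H Δ) (Δ h))) = S h)
    (h : H) :
    S (DK.PiR k H Δ ε h) = DK.PiL k H Δ ε (DK.PiR k H Δ ε h) := by
  set z := DK.PiR k H Δ ε h with hz
  have aux1 : ∀ u : H ⊗[k] H,
      LinearMap.mul' k H (TensorProduct.map (DK.PiR k H Δ ε) S (u * ((1:H) ⊗ₜ[k] z))) =
      LinearMap.mul' k H (TensorProduct.map (DK.PiR k H Δ ε)
        (S ∘ₗ LinearMap.mulRight k z) u) := by
    intro u
    refine TensorProduct.induction_on u ?_ ?_ ?_
    · simp
    · intro p q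
      simp only [Algebra.TensorProduct.tmul_mul_tmul, mul_one, map_tmul, mul'_apply,
        LinearMap.comp_apply, LinearMap.mulRight_apply]
    · intro x y hx hy
      simp only [add_mul, map_add, hx, hy]
  have aux2 : ∀ u : H ⊗[k] H,
      LinearMap.mul' k H (LinearMap.lTensor H (S ∘ₗ LinearMap.mulRight k z) u) =
      LinearMap.mul' k H (LinearMap.lTensor H S (u * ((1:H) ⊗ₜ[k] z))) := by
    intro u
    refine TensorProduct.induction_on u ?_ ?_ ?_
    · simp
    · intro p q
      simp only [Algebra.TensorProduct.tmul_mul_tmul, mul_one, lTensor_tmul, mul'_apply,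
        LinearMap.comp_apply, LinearMap.mulRight_apply]
    · intro x y hx hy
      simp only [add_mul, map_add, hx, hy]
  have hsplit : ∀ u : H ⊗[k] H,
      TensorProduct.map (DK.PiR k H Δ ε) (S ∘ₗ LinearMap.mulRight k z) u =
      LinearMap.lTensor H (S ∘ₗ LinearMap.mulRight k z)
        ((LinearMap.rTensor H (DK.PiR k H Δ ε)) u) := by
    intro u
    rw [← LinearMap.comp_apply, lTensor_comp_rTensor]
  calc S z
      = LinearMap.mul' k H (TensorProduct.map (DK.PiR k H Δ ε) S (Δ z)) :=
        (piR_map_S Δ ε S hco hSR hSS z).symm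
    _ = LinearMap.mul' k H (TensorProduct.map (DK.PiR k H Δ ε) S
          (Δ 1 * ((1:H) ⊗ₜ[k] z))) := by rw [← I1 Δ ε hco hw1 h]
    _ = LinearMap.mul' k H (TensorProduct.map (DK.PiR k H Δ ε)
          (S ∘ₗ LinearMap.mulRight k z) (Δ 1)) := aux1 (Δ 1)
    _ = LinearMap.mul' k H (LinearMap.lTensor H (S ∘ₗ LinearMap.mulRight k z)
          ((LinearMap.rTensor H (DK.PiR k H Δ ε)) (Δ 1))) := by rw [hsplit]
    _ = LinearMap.mul' k H (LinearMap.lTensor H (S ∘ₗ LinearMap.mulRight k z) (Δ 1)) := by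
        rw [M3 Δ ε S hco hcu2 hw1 hSR]
    _ = LinearMap.mul' k H (LinearMap.lTensor H S (Δ 1 * ((1:H) ⊗ₜ[k] z))) := aux2 (Δ 1)
    _ = LinearMap.mul' k H (LinearMap.lTensor H S (Δ z)) := by rw [← I1 Δ ε hco hw1 h]
    _ = DK.PiL k H Δ ε z := hSL z

/-- T32 : `S⁻¹(Π^L(S h)) = Π^R h`. -/
lemma T32 (Sinv : H →ₗ[k] H)
    (hinv1 : ∀ h, Sinv (S h) = h)
    (hε2' : ∀ x y z : H, ε (x * y * z) = DK.eps2' k H ε x z (Δ y))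
    (hco : ∀ h : H, (TensorProduct.assoc k H H H) ((LinearMap.rTensor H Δ) (Δ h)) =
      (LinearMap.lTensor H Δ) (Δ h))
    (hcu2 : ∀ h : H, (TensorProduct.rid k H) ((LinearMap.lTensor H ε) (Δ h)) = h)
    (hw1 : (LinearMap.lTensor H Δ) (Δ 1) =
      (TensorProduct.assoc k H H H) ((Δ 1) ⊗ₜ[k] (1 : H)) * ((1 : H) ⊗ₜ[k] (Δ 1)))
    (hSL : ∀ h : H, LinearMap.mul' k H ((LinearMap.lTensor H S) (Δ h)) = DK.PiL k H Δ ε h)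
    (hSR : ∀ h : H, LinearMap.mul' k H ((LinearMap.rTensor H S) (Δ h)) = DK.PiR k H Δ ε h)
    (hSS : ∀ h : H,
      (LinearMap.mul' k H ∘ₗ LinearMap.lTensor H (LinearMap.mul' k H))
        ((TensorProduct.map S (TensorProduct.map LinearMap.id S))
          ((LinearMap.lTensor H Δ) (Δ h))) = S h)
    (h : H) :
    Sinv (DK.PiL k H Δ ε (S h)) = DK.PiR k H Δ ε h := by
  rw [piL_S Δ ε S hε2' hSL hSR hSS h, ← T24 Δ ε S hco hcu2 hw1 hSL hSR hSS h, hinv1]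

end DKP
end Helpers6
noncomputable section Helpers7
namespace DKP
open TensorProduct LinearMap

set_option synthInstance.maxHeartbeats 1000000
set_option maxHeartbeats 1000000

variable {k : Type*} [CommRing k] {H : Type*} [Ring H] [Algebra k H]
variable (Δ : H →ₗ[k] H ⊗[k] H) (ε : H →ₗ[k] k)
variable {A : Type*} [Ring A] [Algebra k A] (ρ : A →ₗ[k] H ⊗[k] A)

/-- generic fusion: `map id (f∘g) u = map id f (lTensor g u)`. -/
lemma map_id_fuse {M N P Q : Type*} [AddCommGroup M] [Module k M] [AddCommGroup N] [Module k N]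
    [AddCommGroup P] [Module k P] [AddCommGroup Q] [Module k Q]
    (f : N →ₗ[k] P) (g : M →ₗ[k] N) (u : Q ⊗[k] M) :
    TensorProduct.map LinearMap.id (f ∘ₗ g) u =
      TensorProduct.map LinearMap.id f (LinearMap.lTensor Q g u) := by
  refine TensorProduct.induction_on u ?_ ?_ ?_
  · simp
  · intro p q; simp
  · intro x y hx hy; simp only [map_add, hx, hy]

lemma map_fuse_r {M N P Q R' : Type*} [AddCommGroup M] [Module k M] [AddCommGroup N] [Module k N]
    [AddCommGroup P] [Module k P] [AddCommGroup Q] [Module k Q] [AddCommGroup R'] [Module k R']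
    (f : Q →ₗ[k] R') (g : N →ₗ[k] P) (e : M →ₗ[k] N) (u : Q ⊗[k] M) :
    TensorProduct.map f (g ∘ₗ e) u =
      TensorProduct.map f g (LinearMap.lTensor Q e u) := by
  refine TensorProduct.induction_on u ?_ ?_ ?_
  · simp
  · intro p q; simp
  · intro x y hx hy; simp only [map_add, hx, hy]

/-- Fact C : `Σ Π^R(1₋₁) ⊗ 1₀ = ρ(1)`. -/
lemma factC
    (hAcu : ∀ a : A, (TensorProduct.lid k A) ((LinearMap.rTensor A ε) (ρ a)) = a)
    (hAw : (LinearMap.lTensor H ρ) (ρ 1) =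
      (LinearMap.lTensor H (DK.innerW k H A))
        ((TensorProduct.assoc k H H (H ⊗[k] A)) ((Δ 1) ⊗ₜ[k] (ρ 1)))) :
    LinearMap.rTensor A (DK.PiR k H Δ ε) (ρ 1) = ρ 1 := by
  have left : LinearMap.lTensor H ((TensorProduct.lid k A).toLinearMap ∘ₗ LinearMap.rTensor A ε)
      ((LinearMap.lTensor H ρ) (ρ 1)) = ρ 1 := by
    rw [← LinearMap.comp_apply, ← lTensor_comp]
    have : (((TensorProduct.lid k A).toLinearMap ∘ₗ LinearMap.rTensor A ε) ∘ₗ ρ)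
        = LinearMap.id := by ext a; simpa using hAcu a
    rw [this, lTensor_id, LinearMap.id_apply]
  have caux : ∀ (u : H ⊗[k] H) (v : H ⊗[k] A),
      LinearMap.lTensor H ((TensorProduct.lid k A).toLinearMap ∘ₗ LinearMap.rTensor A ε)
        (LinearMap.lTensor H (DK.innerW k H A)
          ((TensorProduct.assoc k H H (H ⊗[k] A)) (u ⊗ₜ[k] v))) =
      LinearMap.rTensor A (DK.coPiR k H H ε u) v := by
    intro u v
    refine TensorProduct.induction_on u ?_ ?_ ?_
    · simp [zero_tmul, coPiR_zero', LinearMap.rTensor_zero]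
    · intro p q
      refine TensorProduct.induction_on v ?_ ?_ ?_
      · simp
      · intro x b
        simp only [assoc_tmul, lTensor_tmul, DK.innerW, LinearMap.comp_apply,
          LinearEquiv.coe_coe, assoc_symm_tmul, rTensor_tmul, comm_tmul, mul'_apply,
          lid_tmul, coPiR_tmul, smul_tmul]
      · intro x y hx hy
        simp only [tmul_add, map_add, hx, hy]
    · intro x y hx hy
      simp only [add_tmul, map_add, hx, hy, coPiR_add', LinearMap.rTensor_add,
        LinearMap.add_apply]
  calc LinearMap.rTensor A (DK.PiR k H Δ ε) (ρ 1)
      = LinearMap.lTensor H ((TensorProduct.lid k A).toLinearMap ∘ₗ LinearMap.rTensor A ε)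
          (LinearMap.lTensor H (DK.innerW k H A)
            ((TensorProduct.assoc k H H (H ⊗[k] A)) ((Δ 1) ⊗ₜ[k] (ρ 1)))) :=
        (caux (Δ 1) (ρ 1)).symm
    _ = LinearMap.lTensor H ((TensorProduct.lid k A).toLinearMap ∘ₗ LinearMap.rTensor A ε)
          ((LinearMap.lTensor H ρ) (ρ 1)) := by rw [← hAw]
    _ = ρ 1 := left

/-- Fact F : `Σ s_A(a₋₁) a₀ = a`. -/
lemma factF
    (hAcu : ∀ a : A, (TensorProduct.lid k A) ((LinearMap.rTensor A ε) (ρ a)) = a)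
    (hAm : ∀ a b : A, ρ (a * b) = ρ a * ρ b) (a : A) :
    LinearMap.mul' k A (TensorProduct.map (DK.sAlin k H ε A ρ) LinearMap.id (ρ a)) = a := by
  have aux1 : ∀ (w v : H ⊗[k] A),
      LinearMap.mul' k A (TensorProduct.map (DK.coPi k H A ε w) LinearMap.id v) =
      ((TensorProduct.lid k A).toLinearMap ∘ₗ LinearMap.rTensor A ε) (w * v) := by
    intro w v
    refine TensorProduct.induction_on v ?_ ?_ ?_
    · simp
    · intro h b
      refine TensorProduct.induction_on w ?_ ?_ ?_
      · simp [coPi_zero]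
      · intro p c
        simp only [map_tmul, coPi_tmul, LinearMap.id_coe, id_eq, mul'_apply,
          Algebra.TensorProduct.tmul_mul_tmul, LinearMap.comp_apply, rTensor_tmul,
          LinearEquiv.coe_coe, lid_tmul, smul_mul_assoc, map_smul, smul_smul]
      · intro x y hx hy
        rw [map_tmul] at hx hy ⊢
        rw [coPi_add, add_tmul, map_add, hx, hy, ← map_add, ← add_mul]
    · intro x y hx hy
      simp only [map_add, mul_add, hx, hy]
  have : LinearMap.mul' k A (TensorProduct.map (DK.sAlin k H ε A ρ) LinearMap.id (ρ a)) =
      ((TensorProduct.lid k A).toLinearMap ∘ₗ LinearMap.rTensor A ε) (ρ 1 * ρ a) :=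
    aux1 (ρ 1) (ρ a)
  rw [this, ← hAm, one_mul]
  simpa using hAcu a

end DKP
end Helpers7
noncomputable section Helpers8
namespace DKP
open TensorProduct LinearMap

set_option synthInstance.maxHeartbeats 1000000
set_option maxHeartbeats 1000000

variable {k : Type*} [CommRing k] {H : Type*} [Ring H] [Algebra k H]
variable (Δ : H →ₗ[k] H ⊗[k] H) (ε : H →ₗ[k] k)
variable {A : Type*} [Ring A] [Algebra k A] (ρ : A →ₗ[k] H ⊗[k] A)

/-- `ω(h ⊗ c) = ε(h) c`. -/
def omA : H ⊗[k] A →ₗ[k] A := (TensorProduct.lid k A).toLinearMap ∘ₗ LinearMap.rTensor A ε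

/-- `ω_g(h ⊗ c) = ε(h g) c`. -/
def omg (g : H) : H ⊗[k] A →ₗ[k] A :=
  (TensorProduct.lid k A).toLinearMap ∘ₗ LinearMap.rTensor A (ε ∘ₗ LinearMap.mulRight k g)

/-- `ΞI(q ⊗ W) = ω(W (q ⊗ 1))`. -/
def XiI : H ⊗[k] (H ⊗[k] A) →ₗ[k] A :=
  omA ε ∘ₗ LinearMap.mul' k (H ⊗[k] A)
    ∘ₗ LinearMap.lTensor (H ⊗[k] A) ((TensorProduct.mk k H A).flip 1)
    ∘ₗ (TensorProduct.comm k H (H ⊗[k] A)).toLinearMap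

/-- `Ξ₂((p ⊗ q) ⊗ W) = ε(p g) ω(W (q ⊗ 1))`. -/
def Xi2 (g : H) : (H ⊗[k] H) ⊗[k] (H ⊗[k] A) →ₗ[k] A :=
  (TensorProduct.lid k A).toLinearMap
    ∘ₗ TensorProduct.map (ε ∘ₗ LinearMap.mulRight k g) (XiI ε)
    ∘ₗ (TensorProduct.assoc k H H (H ⊗[k] A)).toLinearMap

/-- `Ξ₃(x ⊗ W) = ε(x g) ω(ρ(b) W)`. -/
def Xi3 (g : H) (b : A) : H ⊗[k] (H ⊗[k] A) →ₗ[k] A :=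
  (TensorProduct.lid k A).toLinearMap
    ∘ₗ TensorProduct.map (ε ∘ₗ LinearMap.mulRight k g)
        (omA ε ∘ₗ LinearMap.mulLeft k (ρ b))

lemma omA_tmul (h : H) (c : A) : omA (A := A) ε (h ⊗ₜ[k] c) = ε h • c := by simp [omA]

lemma omg_tmul (g h : H) (c : A) : omg (A := A) ε g (h ⊗ₜ[k] c) = ε (h * g) • c := by
  simp [omg]

lemma XiI_tmul (q : H) (W : H ⊗[k] A) :
    XiI ε (q ⊗ₜ[k] W) = omA ε (W * (q ⊗ₜ[k] (1 : A))) := by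
  simp [XiI]

lemma Xi2_tmul (g p q : H) (W : H ⊗[k] A) :
    Xi2 ε g ((p ⊗ₜ[k] q) ⊗ₜ[k] W) = ε (p * g) • omA ε (W * (q ⊗ₜ[k] (1 : A))) := by
  simp [Xi2, XiI_tmul]

lemma Xi3_tmul (g : H) (b : A) (x : H) (W : H ⊗[k] A) :
    Xi3 ε ρ g b (x ⊗ₜ[k] W) = ε (x * g) • omA ε (ρ b * W) := by
  simp [Xi3]

/-- FNcore : `ω_g(W) = Σ ε(1₁ g) ω(W (1₂ ⊗ 1))`. -/
lemma FNcore
    (hε2' : ∀ x y z : H, ε (x * y * z) = DK.eps2' k H ε x z (Δ y))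
    (g : H) (W : H ⊗[k] A) :
    omg (A := A) ε g W = Xi2 ε g (Δ 1 ⊗ₜ[k] W) := by
  have aux : ∀ (u : H ⊗[k] H) (h : H) (c : A),
      Xi2 (A := A) ε g (u ⊗ₜ[k] (h ⊗ₜ[k] c)) = DK.eps2' k H ε h g u • c := by
    intro u h c
    refine TensorProduct.induction_on u ?_ ?_ ?_
    · simp [zero_tmul]
    · intro p q
      rw [Xi2_tmul, eps2'_tmul, Algebra.TensorProduct.tmul_mul_tmul, mul_one, omA_tmul,
        smul_smul]
    · intro x y hx hy
      rw [add_tmul, map_add, hx, hy, map_add, add_smul]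
  refine TensorProduct.induction_on W ?_ ?_ ?_
  · simp [tmul_zero]
  · intro h c
    rw [omg_tmul, aux, ← eps_mul Δ ε hε2']
  · intro x y hx hy
    rw [map_add, tmul_add, map_add, hx, hy]

/-- Fact N : `b s_A(g) = Σ ε(b₋₁ g) b₀`. -/
lemma factN
    (hε2' : ∀ x y z : H, ε (x * y * z) = DK.eps2' k H ε x z (Δ y))
    (hAcu : ∀ a : A, (TensorProduct.lid k A) ((LinearMap.rTensor A ε) (ρ a)) = a)
    (hAm : ∀ a b : A, ρ (a * b) = ρ a * ρ b)
    (hAw : (LinearMap.lTensor H ρ) (ρ 1) =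
      (LinearMap.lTensor H (DK.innerW k H A))
        ((TensorProduct.assoc k H H (H ⊗[k] A)) ((Δ 1) ⊗ₜ[k] (ρ 1))))
    (b : A) (g : H) :
    b * DK.sAlin k H ε A ρ g = omg (A := A) ε g (ρ b) := by
  have homA : ∀ a : A, omA (A := A) ε (ρ a) = a := by
    intro a; simpa [omA] using hAcu a
  have FNa : ∀ w : H ⊗[k] A,
      b * DK.coPi k H A ε w g =
      ((TensorProduct.lid k A).toLinearMap
        ∘ₗ TensorProduct.map (ε ∘ₗ LinearMap.mulRight k g) (LinearMap.mulLeft k b)) w := by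
    intro w
    refine TensorProduct.induction_on w ?_ ?_ ?_
    · simp [coPi_zero]
    · intro h c
      rw [coPi_tmul, mul_smul_comm]
      simp
    · intro x y hx hy
      rw [coPi_add, mul_add, hx, hy, map_add]
  have FNb : ∀ v : H ⊗[k] A,
      Xi3 ε ρ g b (LinearMap.lTensor H ρ v) =
      ((TensorProduct.lid k A).toLinearMap
        ∘ₗ TensorProduct.map (ε ∘ₗ LinearMap.mulRight k g) (LinearMap.mulLeft k b)) v := by
    intro v
    refine TensorProduct.induction_on v ?_ ?_ ?_
    · simp
    · intro x u
      rw [lTensor_tmul, Xi3_tmul, ← hAm, homA]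
      simp
    · intro x y hx hy
      rw [map_add, map_add, hx, hy, map_add]
  have FNd : ∀ (u : H ⊗[k] H) (v : H ⊗[k] A),
      Xi3 ε ρ g b (LinearMap.lTensor H (DK.innerW k H A)
        ((TensorProduct.assoc k H H (H ⊗[k] A)) (u ⊗ₜ[k] v))) =
      Xi2 ε g (u ⊗ₜ[k] (ρ b * v)) := by
    intro u v
    refine TensorProduct.induction_on u ?_ ?_ ?_
    · simp [zero_tmul]
    · intro p q
      refine TensorProduct.induction_on v ?_ ?_ ?_
      · simp [tmul_zero]
      · intro x c
        rw [assoc_tmul, lTensor_tmul, Xi2_tmul]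
        have : DK.innerW k H A (q ⊗ₜ[k] (x ⊗ₜ[k] c)) = (x * q) ⊗ₜ[k] c := by
          simp [DK.innerW]
        rw [this, Xi3_tmul, mul_assoc, Algebra.TensorProduct.tmul_mul_tmul, mul_one]
      · intro x y hx hy
        simp only [tmul_add, map_add, hx, hy, mul_add]
    · intro x y hx hy
      simp only [add_tmul, map_add, hx, hy]
  calc b * DK.sAlin k H ε A ρ g
      = Xi3 ε ρ g b (LinearMap.lTensor H ρ (ρ 1)) := by
        unfold DK.sAlin; rw [FNa (ρ 1), ← FNb (ρ 1)]
    _ = Xi2 ε g (Δ 1 ⊗ₜ[k] (ρ b * ρ 1)) := by rw [hAw, FNd]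
    _ = Xi2 ε g (Δ 1 ⊗ₜ[k] ρ b) := by rw [← hAm, mul_one]
    _ = omg (A := A) ε g (ρ b) := (FNcore Δ ε hε2' g (ρ b)).symm

end DKP
end Helpers8
noncomputable section Helpers9
namespace DKP
open TensorProduct LinearMap

set_option synthInstance.maxHeartbeats 1000000
set_option maxHeartbeats 1000000

variable {k : Type*} [CommRing k] {H : Type*} [Ring H] [Algebra k H]
variable (Δ : H →ₗ[k] H ⊗[k] H) (ε : H →ₗ[k] k)
variable {A : Type*} [Ring A] [Algebra k A] (ρ : A →ₗ[k] H ⊗[k] A)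

/-- SM' : `s_A(h) s_A(g) = s_A(Π^L(h) g)`. -/
lemma sA_mul
    (hε2' : ∀ x y z : H, ε (x * y * z) = DK.eps2' k H ε x z (Δ y))
    (hAcu : ∀ a : A, (TensorProduct.lid k A) ((LinearMap.rTensor A ε) (ρ a)) = a)
    (hAm : ∀ a b : A, ρ (a * b) = ρ a * ρ b)
    (hAw : (LinearMap.lTensor H ρ) (ρ 1) =
      (LinearMap.lTensor H (DK.innerW k H A))
        ((TensorProduct.assoc k H H (H ⊗[k] A)) ((Δ 1) ⊗ₜ[k] (ρ 1))))
    (h g : H) :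
    DK.sAlin k H ε A ρ h * DK.sAlin k H ε A ρ g =
      DK.sAlin k H ε A ρ (DK.PiL k H Δ ε h * g) := by
  have aux_ca : ∀ (w : H ⊗[k] A) (Z : A),
      DK.coPi k H A ε w h * Z =
      ((TensorProduct.lid k A).toLinearMap
        ∘ₗ TensorProduct.map (ε ∘ₗ LinearMap.mulRight k h) (LinearMap.mulRight k Z)) w := by
    intro w Z
    refine TensorProduct.induction_on w ?_ ?_ ?_
    · simp [coPi_zero]
    · intro p c
      rw [coPi_tmul, smul_mul_assoc]
      simp
    · intro x y hx hy
      rw [coPi_add, add_mul, hx, hy, map_add]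
  have hmr : LinearMap.mulRight k (DK.sAlin k H ε A ρ g) = omg (A := A) ε g ∘ₗ ρ := by
    ext c
    simpa using factN Δ ε ρ hε2' hAcu hAm hAw c g
  have SMfin : ∀ (u : H ⊗[k] H) (v : H ⊗[k] A),
      ((TensorProduct.lid k A).toLinearMap
        ∘ₗ TensorProduct.map (ε ∘ₗ LinearMap.mulRight k h) (omg (A := A) ε g))
        (LinearMap.lTensor H (DK.innerW k H A)
          ((TensorProduct.assoc k H H (H ⊗[k] A)) (u ⊗ₜ[k] v))) =
      DK.coPi k H A ε v (DK.coPi k H H ε u h * g) := by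
    intro u v
    refine TensorProduct.induction_on u ?_ ?_ ?_
    · simp [zero_tmul, coPi_zero, coPi_zero', zero_mul]
    · intro p q
      refine TensorProduct.induction_on v ?_ ?_ ?_
      · simp [tmul_zero, coPi_zero', coPi_zero]
      · intro x c
        rw [assoc_tmul, lTensor_tmul]
        have hiw : DK.innerW k H A (q ⊗ₜ[k] (x ⊗ₜ[k] c)) = (x * q) ⊗ₜ[k] c := by
          simp [DK.innerW]
        rw [hiw, coPi_tmul ε p q h, smul_mul_assoc, map_smul, coPi_tmul ε x c (q * g)]
        simp only [LinearMap.comp_apply, map_tmul, omg_tmul, LinearEquiv.coe_toLinearMap,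
          lid_tmul, LinearMap.mulRight_apply, smul_smul, mul_assoc]
      · intro x y hx hy
        simp only [tmul_add, map_add, hx, hy, coPi_add]
    · intro x y hx hy
      simp only [add_tmul, map_add, hx, hy, coPi_add, add_mul]
  calc DK.sAlin k H ε A ρ h * DK.sAlin k H ε A ρ g
      = ((TensorProduct.lid k A).toLinearMap
          ∘ₗ TensorProduct.map (ε ∘ₗ LinearMap.mulRight k h)
            (LinearMap.mulRight k (DK.sAlin k H ε A ρ g))) (ρ 1) := by
        unfold DK.sAlin
        rw [aux_ca (ρ 1)]
    _ = ((TensorProduct.lid k A).toLinearMap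
          ∘ₗ TensorProduct.map (ε ∘ₗ LinearMap.mulRight k h) (omg (A := A) ε g))
          (LinearMap.lTensor H ρ (ρ 1)) := by
        rw [hmr, LinearMap.comp_apply, LinearMap.comp_apply,
          map_fuse_r (ε ∘ₗ LinearMap.mulRight k h) (omg (A := A) ε g) ρ (ρ 1)]
    _ = DK.coPi k H A ε (ρ 1) (DK.coPi k H H ε (Δ 1) h * g) := by
        rw [hAw]
        exact SMfin (Δ 1) (ρ 1)
    _ = DK.sAlin k H ε A ρ (DK.PiL k H Δ ε h * g) := rfl

/-- NF1 : `ρ(1)(h ⊗ 1) = Σ 1₋₁ h ⊗ s_A(1₀ ...)`, precisely `Σ 1₁h ⊗ s_A(1₂)`. -/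
lemma nf1
    (hAcu : ∀ a : A, (TensorProduct.lid k A) ((LinearMap.rTensor A ε) (ρ a)) = a)
    (hAw : (LinearMap.lTensor H ρ) (ρ 1) =
      (LinearMap.lTensor H (DK.innerW k H A))
        ((TensorProduct.assoc k H H (H ⊗[k] A)) ((Δ 1) ⊗ₜ[k] (ρ 1))))
    (h : H) :
    ρ 1 * (h ⊗ₜ[k] (1 : A)) =
      TensorProduct.map (LinearMap.mulRight k h) (DK.sAlin k H ε A ρ) (Δ 1) := by
  have homA : (omA (A := A) ε) ∘ₗ ρ = LinearMap.id := by
    ext a; simpa [omA] using hAcu a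
  have mapmulR : ∀ v : H ⊗[k] A,
      TensorProduct.map (LinearMap.mulRight k h) LinearMap.id v = v * (h ⊗ₜ[k] (1 : A)) := by
    intro v
    refine TensorProduct.induction_on v ?_ ?_ ?_
    · simp
    · intro x u
      simp [Algebra.TensorProduct.tmul_mul_tmul]
    · intro x y hx hy
      rw [map_add, hx, hy, add_mul]
  have NF1aux : ∀ (u : H ⊗[k] H) (v : H ⊗[k] A),
      TensorProduct.map (LinearMap.mulRight k h) (omA (A := A) ε)
        (LinearMap.lTensor H (DK.innerW k H A)
          ((TensorProduct.assoc k H H (H ⊗[k] A)) (u ⊗ₜ[k] v))) =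
      TensorProduct.map (LinearMap.mulRight k h) (DK.coPi k H A ε v) u := by
    intro u v
    refine TensorProduct.induction_on u ?_ ?_ ?_
    · simp [zero_tmul]
    · intro p q
      refine TensorProduct.induction_on v ?_ ?_ ?_
      · simp [tmul_zero, map_tmul, coPi_zero]
      · intro x c
        rw [assoc_tmul, lTensor_tmul]
        have : DK.innerW k H A (q ⊗ₜ[k] (x ⊗ₜ[k] c)) = (x * q) ⊗ₜ[k] c := by
          simp [DK.innerW]
        rw [this, map_tmul, map_tmul, omA_tmul, coPi_tmul]
      · intro x y hx hy
        simp only [tmul_add, map_add, hx, hy]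
        simp only [map_tmul, coPi_add, tmul_add]
    · intro x y hx hy
      simp only [add_tmul, map_add, hx, hy]
  calc ρ 1 * (h ⊗ₜ[k] (1 : A))
      = TensorProduct.map (LinearMap.mulRight k h) LinearMap.id (ρ 1) := (mapmulR (ρ 1)).symm
    _ = TensorProduct.map (LinearMap.mulRight k h) (omA (A := A) ε)
          (LinearMap.lTensor H ρ (ρ 1)) := by
        rw [← map_fuse_r (LinearMap.mulRight k h) (omA (A := A) ε) ρ (ρ 1), homA]
    _ = TensorProduct.map (LinearMap.mulRight k h) (DK.coPi k H A ε (ρ 1)) (Δ 1) := by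
        rw [hAw]; exact NF1aux (Δ 1) (ρ 1)
    _ = TensorProduct.map (LinearMap.mulRight k h) (DK.sAlin k H ε A ρ) (Δ 1) := rfl

/-- NF2 : `ρ(1)(1 ⊗ b) = Σ 1₁ ⊗ s_A(1₂) b`. -/
lemma nf2
    (hAcu : ∀ a : A, (TensorProduct.lid k A) ((LinearMap.rTensor A ε) (ρ a)) = a)
    (hAw : (LinearMap.lTensor H ρ) (ρ 1) =
      (LinearMap.lTensor H (DK.innerW k H A))
        ((TensorProduct.assoc k H H (H ⊗[k] A)) ((Δ 1) ⊗ₜ[k] (ρ 1))))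
    (b : A) :
    ρ 1 * ((1 : H) ⊗ₜ[k] b) =
      TensorProduct.map LinearMap.id
        (LinearMap.mulRight k b ∘ₗ DK.sAlin k H ε A ρ) (Δ 1) := by
  have homA : (omA (A := A) ε) ∘ₗ ρ = LinearMap.id := by
    ext a; simpa [omA] using hAcu a
  have mapmulL : ∀ v : H ⊗[k] A,
      TensorProduct.map LinearMap.id (LinearMap.mulRight k b) v = v * ((1 : H) ⊗ₜ[k] b) := by
    intro v
    refine TensorProduct.induction_on v ?_ ?_ ?_
    · simp
    · intro x u
      simp [Algebra.TensorProduct.tmul_mul_tmul]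
    · intro x y hx hy
      rw [map_add, hx, hy, add_mul]
  have NF2aux : ∀ (u : H ⊗[k] H) (v : H ⊗[k] A),
      TensorProduct.map LinearMap.id (LinearMap.mulRight k b ∘ₗ omA (A := A) ε)
        (LinearMap.lTensor H (DK.innerW k H A)
          ((TensorProduct.assoc k H H (H ⊗[k] A)) (u ⊗ₜ[k] v))) =
      TensorProduct.map LinearMap.id (LinearMap.mulRight k b ∘ₗ DK.coPi k H A ε v) u := by
    intro u v
    refine TensorProduct.induction_on u ?_ ?_ ?_
    · simp [zero_tmul]
    · intro p q
      refine TensorProduct.induction_on v ?_ ?_ ?_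
      · simp [tmul_zero, map_tmul, coPi_zero]
      · intro x c
        rw [assoc_tmul, lTensor_tmul]
        have : DK.innerW k H A (q ⊗ₜ[k] (x ⊗ₜ[k] c)) = (x * q) ⊗ₜ[k] c := by
          simp [DK.innerW]
        rw [this, map_tmul, map_tmul]
        simp only [LinearMap.comp_apply, omA_tmul, coPi_tmul]
      · intro x y hx hy
        simp only [tmul_add, map_add, hx, hy]
        simp only [map_tmul, LinearMap.comp_apply, coPi_add, add_mul, tmul_add,
          LinearMap.id_coe, id_eq, LinearMap.mulRight_apply]
    · intro x y hx hy
      simp only [add_tmul, map_add, hx, hy]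
  have hcomp : (LinearMap.mulRight k b ∘ₗ omA (A := A) ε) ∘ₗ ρ = LinearMap.mulRight k b := by
    rw [LinearMap.comp_assoc, homA, LinearMap.comp_id]
  calc ρ 1 * ((1 : H) ⊗ₜ[k] b)
      = TensorProduct.map LinearMap.id (LinearMap.mulRight k b) (ρ 1) := (mapmulL (ρ 1)).symm
    _ = TensorProduct.map LinearMap.id (LinearMap.mulRight k b ∘ₗ omA (A := A) ε)
          (LinearMap.lTensor H ρ (ρ 1)) := by
        rw [← map_fuse_r LinearMap.id (LinearMap.mulRight k b ∘ₗ omA (A := A) ε) ρ (ρ 1),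
          hcomp]
    _ = TensorProduct.map LinearMap.id
          (LinearMap.mulRight k b ∘ₗ DK.coPi k H A ε (ρ 1)) (Δ 1) := by
        rw [hAw]; exact NF2aux (Δ 1) (ρ 1)
    _ = TensorProduct.map LinearMap.id
          (LinearMap.mulRight k b ∘ₗ DK.sAlin k H ε A ρ) (Δ 1) := rfl

end DKP
end Helpers9
noncomputable section Helpers10
namespace DKP
open TensorProduct LinearMap

set_option synthInstance.maxHeartbeats 1000000
set_option maxHeartbeats 1000000

variable {k : Type*} [CommRing k] {H : Type*} [Ring H] [Algebra k H]
variable (Δ : H →ₗ[k] H ⊗[k] H) (ε : H →ₗ[k] k) (S : H →ₗ[k] H)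
variable {A : Type*} [Ring A] [Algebra k A] (ρ : A →ₗ[k] H ⊗[k] A)

/-- THE KEY IDENTITY (★) : `ρ(1)(S⁻¹(Π^L g) ⊗ 1) = ρ(1)(1 ⊗ s_A(g))`. -/
lemma star (Sinv : H →ₗ[k] H)
    (hΔm : ∀ x y : H, Δ (x * y) = Δ x * Δ y)
    (hco : ∀ h : H, (TensorProduct.assoc k H H H) ((LinearMap.rTensor H Δ) (Δ h)) =
      (LinearMap.lTensor H Δ) (Δ h))
    (hcu1 : ∀ h : H, (TensorProduct.lid k H) ((LinearMap.rTensor H ε) (Δ h)) = h)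
    (hcu2 : ∀ h : H, (TensorProduct.rid k H) ((LinearMap.lTensor H ε) (Δ h)) = h)
    (hε2' : ∀ x y z : H, ε (x * y * z) = DK.eps2' k H ε x z (Δ y))
    (hw1 : (LinearMap.lTensor H Δ) (Δ 1) =
      (TensorProduct.assoc k H H H) ((Δ 1) ⊗ₜ[k] (1 : H)) * ((1 : H) ⊗ₜ[k] (Δ 1)))
    (hw2 : (LinearMap.lTensor H Δ) (Δ 1) =
      ((1 : H) ⊗ₜ[k] (Δ 1)) * (TensorProduct.assoc k H H H) ((Δ 1) ⊗ₜ[k] (1 : H)))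
    (hSL : ∀ h : H, LinearMap.mul' k H ((LinearMap.lTensor H S) (Δ h)) = DK.PiL k H Δ ε h)
    (hSR : ∀ h : H, LinearMap.mul' k H ((LinearMap.rTensor H S) (Δ h)) = DK.PiR k H Δ ε h)
    (hSS : ∀ h : H,
      (LinearMap.mul' k H ∘ₗ LinearMap.lTensor H (LinearMap.mul' k H))
        ((TensorProduct.map S (TensorProduct.map LinearMap.id S))
          ((LinearMap.lTensor H Δ) (Δ h))) = S h)
    (hinv1 : ∀ h, Sinv (S h) = h) (hinv2 : ∀ h, S (Sinv h) = h)
    (hAcu : ∀ a : A, (TensorProduct.lid k A) ((LinearMap.rTensor A ε) (ρ a)) = a)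
    (hAm : ∀ a b : A, ρ (a * b) = ρ a * ρ b)
    (hAw : (LinearMap.lTensor H ρ) (ρ 1) =
      (LinearMap.lTensor H (DK.innerW k H A))
        ((TensorProduct.assoc k H H (H ⊗[k] A)) ((Δ 1) ⊗ₜ[k] (ρ 1))))
    (g : H) :
    ρ 1 * (Sinv (DK.PiL k H Δ ε g) ⊗ₜ[k] (1 : A)) =
      ρ 1 * ((1 : H) ⊗ₜ[k] DK.sAlin k H ε A ρ g) := by
  set v := Sinv g with hv
  have hg : g = S v := (hinv2 g).symm
  have hwv : Sinv (DK.PiL k H Δ ε g) = DK.PiR k H Δ ε v := by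
    rw [hg]
    exact T32 Δ ε S Sinv hinv1 hε2' hco hcu2 hw1 hSL hSR hSS v
  have maps3 : ∀ (u : H ⊗[k] H) (h : H),
      TensorProduct.map (LinearMap.mulRight k h) (DK.sAlin k H ε A ρ) u =
      TensorProduct.map LinearMap.id (DK.sAlin k H ε A ρ) (u * (h ⊗ₜ[k] (1 : H))) := by
    intro u h
    refine TensorProduct.induction_on u ?_ ?_ ?_
    · simp
    · intro p q
      simp [Algebra.TensorProduct.tmul_mul_tmul]
    · intro x y hx hy
      rw [map_add, hx, hy, add_mul, map_add]
  have maps7 : ∀ (u : H ⊗[k] H) (z : H),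
      TensorProduct.map LinearMap.id (DK.sAlin k H ε A ρ) (u * ((1 : H) ⊗ₜ[k] z)) =
      TensorProduct.map LinearMap.id (DK.sAlin k H ε A ρ ∘ₗ LinearMap.mulRight k z) u := by
    intro u z
    refine TensorProduct.induction_on u ?_ ?_ ?_
    · simp
    · intro p q
      simp [Algebra.TensorProduct.tmul_mul_tmul]
    · intro x y hx hy
      rw [add_mul, map_add, hx, hy, map_add]
  have hsp : DK.sAlin k H ε A ρ ∘ₗ DK.PiL k H Δ ε = DK.sAlin k H ε A ρ := by
    ext x
    exact coPi_piL Δ ε hε2' (ρ 1) x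
  have s8 : DK.sAlin k H ε A ρ ∘ₗ LinearMap.mulRight k (DK.PiR k H Δ ε v) =
      DK.sAlin k H ε A ρ ∘ₗ LinearMap.mulRight k (S v) := by
    ext y
    simp only [LinearMap.comp_apply, LinearMap.mulRight_apply]
    have aux : ∀ w : H ⊗[k] A,
        DK.coPi k H A ε w (y * S v) = DK.coPi k H A ε w (y * DK.PiR k H Δ ε v) := by
      intro w
      refine TensorProduct.induction_on w ?_ ?_ ?_
      · simp [coPi_zero]
      · intro p c
        rw [coPi_tmul, coPi_tmul, ← mul_assoc, ← mul_assoc,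
          eps_S Δ ε S hε2' hSL hSR hSS (p * y) v]
      · intro x y' hx hy
        rw [coPi_add, coPi_add, hx, hy]
    exact (aux (ρ 1)).symm
  have s9 : LinearMap.mulRight k (DK.sAlin k H ε A ρ g) ∘ₗ DK.sAlin k H ε A ρ =
      (DK.sAlin k H ε A ρ ∘ₗ LinearMap.mulRight k g) ∘ₗ DK.PiL k H Δ ε := by
    ext q
    simp only [LinearMap.comp_apply, LinearMap.mulRight_apply]
    exact sA_mul Δ ε ρ hε2' hAcu hAm hAw q g
  calc ρ 1 * (Sinv (DK.PiL k H Δ ε g) ⊗ₜ[k] (1 : A))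
      = ρ 1 * (DK.PiR k H Δ ε v ⊗ₜ[k] (1 : A)) := by rw [hwv]
    _ = TensorProduct.map (LinearMap.mulRight k (DK.PiR k H Δ ε v))
          (DK.sAlin k H ε A ρ) (Δ 1) := nf1 Δ ε ρ hAcu hAw _
    _ = TensorProduct.map LinearMap.id (DK.sAlin k H ε A ρ)
          (Δ 1 * (DK.PiR k H Δ ε v ⊗ₜ[k] (1 : H))) := maps3 (Δ 1) _
    _ = TensorProduct.map LinearMap.id (DK.sAlin k H ε A ρ)
          (LinearMap.lTensor H (DK.PiL k H Δ ε) (Δ (DK.PiR k H Δ ε v))) := by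
        rw [T18 Δ ε hΔm hco hcu2 hw2]
    _ = TensorProduct.map LinearMap.id (DK.sAlin k H ε A ρ) (Δ (DK.PiR k H Δ ε v)) := by
        rw [← map_fuse_r LinearMap.id (DK.sAlin k H ε A ρ) (DK.PiL k H Δ ε), hsp]
    _ = TensorProduct.map LinearMap.id (DK.sAlin k H ε A ρ)
          (Δ 1 * ((1 : H) ⊗ₜ[k] DK.PiR k H Δ ε v)) := by
        rw [I1 Δ ε hco hw1 v]
    _ = TensorProduct.map LinearMap.id
          (DK.sAlin k H ε A ρ ∘ₗ LinearMap.mulRight k (S v)) (Δ 1) := by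
        rw [maps7, s8]
    _ = TensorProduct.map LinearMap.id
          (DK.sAlin k H ε A ρ ∘ₗ LinearMap.mulRight k g) (Δ 1) := by rw [← hg]
    _ = ρ 1 * ((1 : H) ⊗ₜ[k] DK.sAlin k H ε A ρ g) := by
        rw [nf2 Δ ε ρ hAcu hAw (DK.sAlin k H ε A ρ g), s9,
          map_fuse_r LinearMap.id (DK.sAlin k H ε A ρ ∘ₗ LinearMap.mulRight k g)
            (DK.PiL k H Δ ε) (Δ 1),
          M1 Δ ε hcu1 hw2]

end DKP
end Helpers10
noncomputable section Helpers11
namespace DKP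
open TensorProduct LinearMap

set_option synthInstance.maxHeartbeats 1000000
set_option maxHeartbeats 1000000

variable {k : Type*} [CommRing k] {H : Type*} [Ring H] [Algebra k H]
  {C : Type*} [AddCommGroup C] [Module k C]
  {A : Type*} [Ring A] [Algebra k A]

/-- The map `inn` of the theorem. -/
def innT (act : H →ₗ[k] C →ₗ[k] C) : (H ⊗[k] A) ⊗[k] (C ⊗[k] A) →ₗ[k] C ⊗[k] A :=
  TensorProduct.map (DK.evC k H C act) (LinearMap.mul' k A) ∘ₗ
    (TensorProduct.tensorTensorTensorComm k H A C A).toLinearMap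

variable (act : H →ₗ[k] C →ₗ[k] C)

lemma innT_tmul (h : H) (b : A) (c : C) (a : A) :
    innT act ((h ⊗ₜ[k] b) ⊗ₜ[k] (c ⊗ₜ[k] a)) = act h c ⊗ₜ[k] (b * a) := by
  simp [innT, DK.evC]

lemma inn_mul (hactm : ∀ (g h : H) (c : C), act (g * h) c = act g (act h c))
    (u v : (H ⊗[k] A)) (x : C ⊗[k] A) :
    innT act (u ⊗ₜ[k] innT act (v ⊗ₜ[k] x)) = innT act ((u * v) ⊗ₜ[k] x) := by
  refine TensorProduct.induction_on u ?_ ?_ ?_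
  · simp [zero_tmul]
  · intro h b
    refine TensorProduct.induction_on v ?_ ?_ ?_
    · simp [zero_tmul, tmul_zero]
    · intro h' b'
      refine TensorProduct.induction_on x ?_ ?_ ?_
      · simp [tmul_zero]
      · intro c a
        rw [innT_tmul, innT_tmul, Algebra.TensorProduct.tmul_mul_tmul, innT_tmul,
          hactm, mul_assoc]
      · intro y z hy hz
        simp only [map_add, tmul_add, hy, hz]
    · intro y z hy hz
      simp only [add_tmul, map_add, tmul_add, add_mul, mul_add, hy, hz]
  · intro y z hy hz
    simp only [add_tmul, map_add, add_mul, hy, hz]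

lemma inn_shift1 (hactm : ∀ (g h : H) (c : C), act (g * h) c = act g (act h c))
    (u : H ⊗[k] A) (h : H) (c : C) (a : A) :
    innT act (u ⊗ₜ[k] (act h c ⊗ₜ[k] a)) =
      innT act ((u * (h ⊗ₜ[k] (1 : A))) ⊗ₜ[k] (c ⊗ₜ[k] a)) := by
  refine TensorProduct.induction_on u ?_ ?_ ?_
  · simp [zero_tmul]
  · intro p b
    rw [innT_tmul, Algebra.TensorProduct.tmul_mul_tmul, mul_one, innT_tmul, ← hactm]
  · intro y z hy hz
    simp only [add_tmul, map_add, add_mul, hy, hz]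

lemma inn_shift2 (u : H ⊗[k] A) (c : C) (b a : A) :
    innT act (u ⊗ₜ[k] (c ⊗ₜ[k] (b * a))) =
      innT act ((u * ((1 : H) ⊗ₜ[k] b)) ⊗ₜ[k] (c ⊗ₜ[k] a)) := by
  refine TensorProduct.induction_on u ?_ ?_ ?_
  · simp [zero_tmul]
  · intro p b'
    rw [innT_tmul, Algebra.TensorProduct.tmul_mul_tmul, mul_one, innT_tmul, mul_assoc]
  · intro y z hy hz
    simp only [add_tmul, map_add, add_mul, hy, hz]

lemma inn_rT (u : H ⊗[k] A) (x : C ⊗[k] A) (a' : A) :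
    innT act (u ⊗ₜ[k] (LinearMap.lTensor C (LinearMap.mulRight k a') x)) =
      LinearMap.lTensor C (LinearMap.mulRight k a') (innT act (u ⊗ₜ[k] x)) := by
  refine TensorProduct.induction_on u ?_ ?_ ?_
  · simp [zero_tmul]
  · intro h b
    refine TensorProduct.induction_on x ?_ ?_ ?_
    · simp [tmul_zero]
    · intro c a
      rw [lTensor_tmul, innT_tmul, innT_tmul, lTensor_tmul]
      simp [mul_assoc]
    · intro y z hy hz
      simp only [map_add, tmul_add, hy, hz]
  · intro y z hy hz
    simp only [add_tmul, map_add, hy, hz]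

end DKP
end Helpers11
noncomputable section Helpers12
namespace DKP
open TensorProduct LinearMap

set_option synthInstance.maxHeartbeats 1000000
set_option maxHeartbeats 1000000

variable {k : Type*} [CommRing k] {H : Type*} [Ring H] [Algebra k H]
  {C : Type*} [AddCommGroup C] [Module k C]
  {A : Type*} [Ring A] [Algebra k A]
variable (Δ : H →ₗ[k] H ⊗[k] H) (ε : H →ₗ[k] k) (S Sinv : H →ₗ[k] H)
  (act : H →ₗ[k] C →ₗ[k] C) (ρ : A →ₗ[k] H ⊗[k] A)

lemma map_fuse_l {M N P Q R' : Type*} [AddCommGroup M] [Module k M] [AddCommGroup N] [Module k N]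
    [AddCommGroup P] [Module k P] [AddCommGroup Q] [Module k Q] [AddCommGroup R'] [Module k R']
    (f : M →ₗ[k] P) (g : N →ₗ[k] R') (e : Q →ₗ[k] M) (u : Q ⊗[k] N) :
    TensorProduct.map (f ∘ₗ e) g u = TensorProduct.map f g (LinearMap.rTensor N e u) := by
  refine TensorProduct.induction_on u ?_ ?_ ?_
  · simp
  · intro p q; simp
  · intro x y hx hy; simp only [map_add, hx, hy]

/-- Goal (1). -/
lemma part1
    (hΔm : ∀ x y : H, Δ (x * y) = Δ x * Δ y)
    (hco : ∀ h : H, (TensorProduct.assoc k H H H) ((LinearMap.rTensor H Δ) (Δ h)) =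
      (LinearMap.lTensor H Δ) (Δ h))
    (hcu1 : ∀ h : H, (TensorProduct.lid k H) ((LinearMap.rTensor H ε) (Δ h)) = h)
    (hcu2 : ∀ h : H, (TensorProduct.rid k H) ((LinearMap.lTensor H ε) (Δ h)) = h)
    (hε2' : ∀ x y z : H, ε (x * y * z) = DK.eps2' k H ε x z (Δ y))
    (hw1 : (LinearMap.lTensor H Δ) (Δ 1) =
      (TensorProduct.assoc k H H H) ((Δ 1) ⊗ₜ[k] (1 : H)) * ((1 : H) ⊗ₜ[k] (Δ 1)))
    (hw2 : (LinearMap.lTensor H Δ) (Δ 1) =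
      ((1 : H) ⊗ₜ[k] (Δ 1)) * (TensorProduct.assoc k H H H) ((Δ 1) ⊗ₜ[k] (1 : H)))
    (hSL : ∀ h : H, LinearMap.mul' k H ((LinearMap.lTensor H S) (Δ h)) = DK.PiL k H Δ ε h)
    (hSR : ∀ h : H, LinearMap.mul' k H ((LinearMap.rTensor H S) (Δ h)) = DK.PiR k H Δ ε h)
    (hSS : ∀ h : H,
      (LinearMap.mul' k H ∘ₗ LinearMap.lTensor H (LinearMap.mul' k H))
        ((TensorProduct.map S (TensorProduct.map LinearMap.id S))
          ((LinearMap.lTensor H Δ) (Δ h))) = S h)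
    (hinv1 : ∀ h, Sinv (S h) = h) (hinv2 : ∀ h, S (Sinv h) = h)
    (hactm : ∀ (g h : H) (c : C), act (g * h) c = act g (act h c))
    (hAcu : ∀ a : A, (TensorProduct.lid k A) ((LinearMap.rTensor A ε) (ρ a)) = a)
    (hAm : ∀ a b : A, ρ (a * b) = ρ a * ρ b)
    (hAw : (LinearMap.lTensor H ρ) (ρ 1) =
      (LinearMap.lTensor H (DK.innerW k H A))
        ((TensorProduct.assoc k H H (H ⊗[k] A)) ((Δ 1) ⊗ₜ[k] (ρ 1))))
    (g : H) (c : C) (a : A) :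
    innT act (ρ 1 ⊗ₜ[k] ((act (Sinv (DK.PiL k H Δ ε g)) c) ⊗ₜ[k] a)) =
      innT act (ρ 1 ⊗ₜ[k] (c ⊗ₜ[k] (DK.sAlin k H ε A ρ g * a))) := by
  rw [inn_shift1 act hactm, inn_shift2 act,
    star Δ ε S ρ Sinv hΔm hco hcu1 hcu2 hε2' hw1 hw2 hSL hSR hSS hinv1 hinv2 hAcu hAm hAw g]

/-- Goal (3). -/
lemma part3
    (hactm : ∀ (g h : H) (c : C), act (g * h) c = act g (act h c))
    (hAm : ∀ a b : A, ρ (a * b) = ρ a * ρ b)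
    (x : C ⊗[k] A) :
    innT act (ρ 1 ⊗ₜ[k] innT act (ρ 1 ⊗ₜ[k] x)) = innT act (ρ 1 ⊗ₜ[k] x) := by
  rw [inn_mul act hactm, ← hAm, mul_one]

/-- Goal (4a). -/
lemma part4a
    (hactm : ∀ (g h : H) (c : C), act (g * h) c = act g (act h c))
    (hAm : ∀ a b : A, ρ (a * b) = ρ a * ρ b)
    (a : A) (x : C ⊗[k] A) :
    innT act (ρ 1 ⊗ₜ[k] innT act (ρ a ⊗ₜ[k] x)) = innT act (ρ a ⊗ₜ[k] x) := by
  rw [inn_mul act hactm, ← hAm, one_mul]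

/-- Goal (4b). -/
lemma part4b
    (hactm : ∀ (g h : H) (c : C), act (g * h) c = act g (act h c))
    (hAm : ∀ a b : A, ρ (a * b) = ρ a * ρ b)
    (a : A) (x : C ⊗[k] A) :
    innT act (ρ a ⊗ₜ[k] innT act (ρ 1 ⊗ₜ[k] x)) = innT act (ρ a ⊗ₜ[k] x) := by
  rw [inn_mul act hactm, ← hAm, mul_one]

/-- Goal (2). -/
lemma part2
    (hco : ∀ h : H, (TensorProduct.assoc k H H H) ((LinearMap.rTensor H Δ) (Δ h)) =
      (LinearMap.lTensor H Δ) (Δ h))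
    (hcu2 : ∀ h : H, (TensorProduct.rid k H) ((LinearMap.lTensor H ε) (Δ h)) = h)
    (hε2' : ∀ x y z : H, ε (x * y * z) = DK.eps2' k H ε x z (Δ y))
    (hw1 : (LinearMap.lTensor H Δ) (Δ 1) =
      (TensorProduct.assoc k H H H) ((Δ 1) ⊗ₜ[k] (1 : H)) * ((1 : H) ⊗ₜ[k] (Δ 1)))
    (hSL : ∀ h : H, LinearMap.mul' k H ((LinearMap.lTensor H S) (Δ h)) = DK.PiL k H Δ ε h)
    (hSR : ∀ h : H, LinearMap.mul' k H ((LinearMap.rTensor H S) (Δ h)) = DK.PiR k H Δ ε h)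
    (hSS : ∀ h : H,
      (LinearMap.mul' k H ∘ₗ LinearMap.lTensor H (LinearMap.mul' k H))
        ((TensorProduct.map S (TensorProduct.map LinearMap.id S))
          ((LinearMap.lTensor H Δ) (Δ h))) = S h)
    (hinv1 : ∀ h, Sinv (S h) = h)
    (hAcu : ∀ a : A, (TensorProduct.lid k A) ((LinearMap.rTensor A ε) (ρ a)) = a)
    (hAm : ∀ a b : A, ρ (a * b) = ρ a * ρ b)
    (hAw : (LinearMap.lTensor H ρ) (ρ 1) =
      (LinearMap.lTensor H (DK.innerW k H A))
        ((TensorProduct.assoc k H H (H ⊗[k] A)) ((Δ 1) ⊗ₜ[k] (ρ 1))))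
    (rel : Submodule k (C ⊗[k] A))
    (hrel : ∀ (g : H) (c : C) (a : A),
      (act (Sinv (DK.PiL k H Δ ε g)) c) ⊗ₜ[k] a - c ⊗ₜ[k] (DK.sAlin k H ε A ρ g * a) ∈ rel)
    (x : C ⊗[k] A) :
    rel.mkQ (innT act (ρ 1 ⊗ₜ[k] x)) = rel.mkQ x := by
  refine TensorProduct.induction_on x ?_ ?_ ?_
  · simp [tmul_zero]
  · intro c a
    have hGrel : ∀ (h : H) (b : A),
        rel.mkQ (act (DK.PiR k H Δ ε h) c ⊗ₜ[k] (b * a)) =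
        rel.mkQ (c ⊗ₜ[k] (DK.sAlin k H ε A ρ (S h) * (b * a))) := by
      intro h b
      have hmem := hrel (S h) c (b * a)
      rw [T32 Δ ε S Sinv hinv1 hε2' hco hcu2 hw1 hSL hSR hSS h] at hmem
      exact (Submodule.Quotient.eq rel).mpr hmem
    have h1 : ∀ v : H ⊗[k] A,
        rel.mkQ (innT act ((LinearMap.rTensor A (DK.PiR k H Δ ε) v) ⊗ₜ[k] (c ⊗ₜ[k] a))) =
        rel.mkQ (c ⊗ₜ[k] (LinearMap.mul' k A
          (TensorProduct.map (DK.sAlin k H ε A ρ ∘ₗ S) (LinearMap.mulRight k a) v))) := by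
      intro v
      refine TensorProduct.induction_on v ?_ ?_ ?_
      · simp [zero_tmul, tmul_zero]
      · intro h b
        rw [rTensor_tmul, innT_tmul, map_tmul, mul'_apply]
        simp only [LinearMap.comp_apply, LinearMap.mulRight_apply]
        exact hGrel h b
      · intro y z hy hz
        simp only [map_add, add_tmul, tmul_add, hy, hz]
    have step2 : rel.mkQ (innT act (ρ 1 ⊗ₜ[k] (c ⊗ₜ[k] a))) =
        rel.mkQ (c ⊗ₜ[k] (LinearMap.mul' k A
          (TensorProduct.map (DK.sAlin k H ε A ρ ∘ₗ S) (LinearMap.mulRight k a) (ρ 1)))) := by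
      conv_lhs => rw [← factC Δ ε ρ hAcu hAw]
      exact h1 (ρ 1)
    have mulshift : ∀ v : H ⊗[k] A,
        LinearMap.mul' k A (TensorProduct.map (DK.sAlin k H ε A ρ ∘ₗ S)
          (LinearMap.mulRight k a) v) =
        LinearMap.mul' k A (TensorProduct.map (DK.sAlin k H ε A ρ ∘ₗ S) LinearMap.id v) * a := by
      intro v
      refine TensorProduct.induction_on v ?_ ?_ ?_
      · simp
      · intro h b
        simp [mul_assoc]
      · intro y z hy hz
        simp only [map_add, hy, hz, add_mul]
    have hss : DK.sAlin k H ε A ρ ∘ₗ S = DK.sAlin k H ε A ρ ∘ₗ DK.PiR k H Δ ε := by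
      ext y
      simp only [LinearMap.comp_apply]
      calc DK.sAlin k H ε A ρ (S y)
          = DK.sAlin k H ε A ρ (DK.PiL k H Δ ε (S y)) :=
            (coPi_piL Δ ε hε2' (ρ 1) (S y)).symm
        _ = DK.sAlin k H ε A ρ (DK.PiL k H Δ ε (DK.PiR k H Δ ε y)) := by
            rw [piL_S Δ ε S hε2' hSL hSR hSS y]
        _ = DK.sAlin k H ε A ρ (DK.PiR k H Δ ε y) :=
            coPi_piL Δ ε hε2' (ρ 1) (DK.PiR k H Δ ε y)
    have deepB : LinearMap.mul' k A
        (TensorProduct.map (DK.sAlin k H ε A ρ ∘ₗ S) LinearMap.id (ρ 1)) = 1 := by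
      rw [hss, map_fuse_l, factC Δ ε ρ hAcu hAw]
      exact factF ε ρ hAcu hAm 1
    rw [step2, mulshift (ρ 1), deepB, one_mul]
  · intro y z hy hz
    simp only [tmul_add, map_add, hy, hz]

end DKP
end Helpers12
noncomputable section Helpers13
namespace DKP
open TensorProduct LinearMap

set_option synthInstance.maxHeartbeats 1000000
set_option maxHeartbeats 1000000

variable {k : Type*} [CommRing k] {H : Type*} [Ring H] [Algebra k H]
  {C : Type*} [AddCommGroup C] [Module k C]
  {A : Type*} [Ring A] [Algebra k A]
variable (Δ : H →ₗ[k] H ⊗[k] H)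
  (act : H →ₗ[k] C →ₗ[k] C) (ΔC : C →ₗ[k] C ⊗[k] C) (ρ : A →ₗ[k] H ⊗[k] A)

/-- Goal (5). -/
lemma part5
    (hΔC : ∀ (h : H) (c : C), ΔC (act h c) = (DK.Psi2 k H C act) ((Δ h) ⊗ₜ[k] (ΔC c)))
    (x : C ⊗[k] A) :
    ((TensorProduct.assoc k C C A).toLinearMap ∘ₗ LinearMap.rTensor A ΔC)
        (innT act (ρ 1 ⊗ₜ[k] x)) =
      (TensorProduct.map (DK.evC k H C act) (innT act) ∘ₗ
        (TensorProduct.tensorTensorTensorComm k H (H ⊗[k] A) C (C ⊗[k] A)).toLinearMap)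
        (((TensorProduct.assoc k H H A) ((LinearMap.rTensor A Δ) (ρ 1))) ⊗ₜ[k]
          (((TensorProduct.assoc k C C A).toLinearMap ∘ₗ LinearMap.rTensor A ΔC) x)) := by
  have N12 : ∀ (w : H ⊗[k] H) (z : C ⊗[k] C) (b a : A),
      (TensorProduct.assoc k C C A) ((DK.Psi2 k H C act (w ⊗ₜ[k] z)) ⊗ₜ[k] (b * a)) =
      (TensorProduct.map (DK.evC k H C act) (innT act))
        ((TensorProduct.tensorTensorTensorComm k H (H ⊗[k] A) C (C ⊗[k] A))
          (((TensorProduct.assoc k H H A) (w ⊗ₜ[k] b)) ⊗ₜ[k]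
            ((TensorProduct.assoc k C C A) (z ⊗ₜ[k] a)))) := by
    intro w z b a
    refine TensorProduct.induction_on w ?_ ?_ ?_
    · simp [zero_tmul]
    · intro p q
      refine TensorProduct.induction_on z ?_ ?_ ?_
      · simp [zero_tmul, tmul_zero]
      · intro d d'
        simp only [DK.Psi2, DK.evC, LinearMap.comp_apply, LinearEquiv.coe_coe,
          tensorTensorTensorComm_tmul, map_tmul, lift.tmul, assoc_tmul, innT_tmul]
      · intro y y' hy hy'
        simp only [tmul_add, map_add, add_tmul, hy, hy']
    · intro y y' hy hy'
      simp only [add_tmul, map_add, hy, hy']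
  have M12 : ∀ (u : H ⊗[k] A) (c : C) (a : A),
      ((TensorProduct.assoc k C C A).toLinearMap ∘ₗ LinearMap.rTensor A ΔC)
          (innT act (u ⊗ₜ[k] (c ⊗ₜ[k] a))) =
      (TensorProduct.map (DK.evC k H C act) (innT act))
        ((TensorProduct.tensorTensorTensorComm k H (H ⊗[k] A) C (C ⊗[k] A))
          (((TensorProduct.assoc k H H A) ((LinearMap.rTensor A Δ) u)) ⊗ₜ[k]
            ((TensorProduct.assoc k C C A) ((ΔC c) ⊗ₜ[k] a)))) := by
    intro u c a
    refine TensorProduct.induction_on u ?_ ?_ ?_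
    · simp [zero_tmul]
    · intro h b
      rw [innT_tmul, LinearMap.comp_apply, rTensor_tmul, rTensor_tmul]
      simp only [LinearEquiv.coe_toLinearMap]
      rw [hΔC h c]
      exact N12 (Δ h) (ΔC c) b a
    · intro y y' hy hy'
      simp only [add_tmul, map_add, hy, hy']
  refine TensorProduct.induction_on x ?_ ?_ ?_
  · simp [tmul_zero]
  · intro c a
    have := M12 (ρ 1) c a
    rw [this]
    simp only [LinearMap.comp_apply, rTensor_tmul, LinearEquiv.coe_toLinearMap]
  · intro y y' hy hy'
    simp only [tmul_add, map_add, hy, hy']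

end DKP
end Helpers13
noncomputable section Helpers14
namespace DKP
open TensorProduct LinearMap

set_option synthInstance.maxHeartbeats 1000000
set_option maxHeartbeats 1000000

variable {k : Type*} [CommRing k] {H : Type*} [Ring H] [Algebra k H]
  {C : Type*} [AddCommGroup C] [Module k C]
  {A : Type*} [Ring A] [Algebra k A]
variable (Δ : H →ₗ[k] H ⊗[k] H) (ε : H →ₗ[k] k)
  (act : H →ₗ[k] C →ₗ[k] C) (εC : C →ₗ[k] k) (ρ : A →ₗ[k] H ⊗[k] A)

/-- `Ba((p ⊗ q) ⊗ W) = ε_C(p·c) • (ΞI(q ⊗ W) * a)`. -/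
def Ba (c : C) (a : A) : (H ⊗[k] H) ⊗[k] (H ⊗[k] A) →ₗ[k] A :=
  LinearMap.mulRight k a ∘ₗ (TensorProduct.lid k A).toLinearMap
    ∘ₗ TensorProduct.map (εC ∘ₗ act.flip c) (XiI ε)
    ∘ₗ (TensorProduct.assoc k H H (H ⊗[k] A)).toLinearMap

lemma Ba_tmul (c : C) (a : A) (p q : H) (W : H ⊗[k] A) :
    Ba ε act εC c a ((p ⊗ₜ[k] q) ⊗ₜ[k] W) =
      εC (act p c) • (XiI ε (q ⊗ₜ[k] W) * a) := by
  simp [Ba, smul_mul_assoc]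

lemma etil_rep (c : C) :
    DK.etil k H Δ C act εC c =
      ((TensorProduct.lid k H).toLinearMap
        ∘ₗ TensorProduct.map (εC ∘ₗ act.flip c) LinearMap.id) (Δ 1) := by
  have aux : ∀ u : H ⊗[k] H,
      ((TensorProduct.lid k H).toLinearMap
        ∘ₗ LinearMap.rTensor H (εC ∘ₗ DK.evC k H C act)
        ∘ₗ (TensorProduct.assoc k H C H).symm.toLinearMap
        ∘ₗ LinearMap.lTensor H (TensorProduct.comm k H C).toLinearMap
        ∘ₗ (TensorProduct.assoc k H H C).toLinearMap) (u ⊗ₜ[k] c) =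
      ((TensorProduct.lid k H).toLinearMap
        ∘ₗ TensorProduct.map (εC ∘ₗ act.flip c) LinearMap.id) u := by
    intro u
    refine TensorProduct.induction_on u ?_ ?_ ?_
    · simp [zero_tmul]
    · intro p q
      simp [DK.evC]
    · intro x y hx hy
      simp only [add_tmul, map_add, hx, hy]
  exact aux (Δ 1)

lemma sA_eq_XiI (q : H) :
    DK.sAlin k H ε A ρ q = XiI ε (q ⊗ₜ[k] ρ 1) := by
  rw [XiI_tmul]
  have aux : ∀ v : H ⊗[k] A,
      DK.coPi k H A ε v q = omA (A := A) ε (v * (q ⊗ₜ[k] (1 : A))) := by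
    intro v
    refine TensorProduct.induction_on v ?_ ?_ ?_
    · simp [coPi_zero]
    · intro h b
      rw [coPi_tmul, Algebra.TensorProduct.tmul_mul_tmul, mul_one, omA_tmul]
    · intro x y hx hy
      rw [coPi_add, add_mul, map_add, hx, hy]
  exact aux (ρ 1)

/-- Goal (6). -/
lemma part6
    (hεC : ∀ (h g : H) (c : C), εC (act (h * g) c) =
      (TensorProduct.lid k k)
        ((TensorProduct.map (εC ∘ₗ act.flip c) (ε ∘ₗ LinearMap.mulLeft k h)) (Δ g)))
    (x : C ⊗[k] A) :
    ((TensorProduct.lid k A).toLinearMap ∘ₗ TensorProduct.map εC LinearMap.id)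
        (innT act (ρ 1 ⊗ₜ[k] x)) =
      (LinearMap.mul' k A ∘ₗ
        TensorProduct.map (DK.sAlin k H ε A ρ ∘ₗ DK.etil k H Δ C act εC) LinearMap.id) x := by
  have aux6 : ∀ (c : C) (a : A) (h : H) (b : A) (w : H ⊗[k] H),
      Ba ε act εC c a (w ⊗ₜ[k] (h ⊗ₜ[k] b)) =
      ((TensorProduct.lid k k)
        ((TensorProduct.map (εC ∘ₗ act.flip c) (ε ∘ₗ LinearMap.mulLeft k h)) w)) • (b * a) := by
    intro c a h b w
    refine TensorProduct.induction_on w ?_ ?_ ?_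
    · simp [zero_tmul]
    · intro p q
      rw [Ba_tmul, XiI_tmul, Algebra.TensorProduct.tmul_mul_tmul, mul_one, omA_tmul]
      simp only [map_tmul, LinearMap.comp_apply, LinearMap.flip_apply,
        LinearMap.mulLeft_apply, lid_tmul, smul_eq_mul, smul_mul_assoc, smul_smul]
    · intro x' y hx hy
      simp only [add_tmul, map_add, hx, hy, LinearMap.add_apply, add_smul]
  have F6 : ∀ (u : H ⊗[k] A) (c : C) (a : A),
      ((TensorProduct.lid k A).toLinearMap ∘ₗ TensorProduct.map εC LinearMap.id)
        (innT act (u ⊗ₜ[k] (c ⊗ₜ[k] a))) = Ba ε act εC c a (Δ 1 ⊗ₜ[k] u) := by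
    intro u c a
    refine TensorProduct.induction_on u ?_ ?_ ?_
    · simp [zero_tmul, tmul_zero]
    · intro h b
      rw [innT_tmul, aux6]
      have hsc : εC (act h c) =
          (TensorProduct.lid k k)
            ((TensorProduct.map (εC ∘ₗ act.flip c) (ε ∘ₗ LinearMap.mulLeft k h)) (Δ 1)) := by
        have := hεC h 1 c
        rwa [mul_one] at this
      rw [← hsc]
      simp
    · intro x' y hx hy
      simp only [add_tmul, map_add, tmul_add, hx, hy]
  have F6' : ∀ (w : H ⊗[k] H) (c : C) (a : A),
      DK.sAlin k H ε A ρ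
        (((TensorProduct.lid k H).toLinearMap
          ∘ₗ TensorProduct.map (εC ∘ₗ act.flip c) LinearMap.id) w) * a =
      Ba ε act εC c a (w ⊗ₜ[k] ρ 1) := by
    intro w c a
    refine TensorProduct.induction_on w ?_ ?_ ?_
    · simp [zero_tmul]
    · intro p q
      rw [Ba_tmul, ← sA_eq_XiI ε ρ q]
      simp only [LinearMap.comp_apply, map_tmul, LinearMap.flip_apply, LinearMap.id_coe,
        id_eq, LinearEquiv.coe_toLinearMap, lid_tmul, map_smul, smul_mul_assoc]
    · intro x' y hx hy
      simp only [add_tmul, map_add, hx, hy, LinearMap.add_apply, add_mul]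
  refine TensorProduct.induction_on x ?_ ?_ ?_
  · simp [tmul_zero]
  · intro c a
    rw [F6 (ρ 1) c a]
    have : (LinearMap.mul' k A ∘ₗ
        TensorProduct.map (DK.sAlin k H ε A ρ ∘ₗ DK.etil k H Δ C act εC) LinearMap.id)
        (c ⊗ₜ[k] a) = DK.sAlin k H ε A ρ (DK.etil k H Δ C act εC c) * a := by
      simp
    rw [this, etil_rep Δ act εC c, F6' (Δ 1) c a]
  · intro y z hy hz
    simp only [tmul_add, map_add, hy, hz]

end DKP
end Helpers14

open TensorProduct LinearMap

/-- Let `(H, A, C)` be a weak Doi-Koppinen datum over a weak Hopf algebra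
`H` with bijective antipode, viewed as a Doi-Koppinen datum over `R = Im Π^L`.  The
`A`-coring `𝒞̃ = {Σ 1₍₋₁₎·cⁱ ⊗ 1₍₀₎aⁱ} ⊆ C ⊗ A` (the range of the projection
`Φ = θ : c ⊗ a ↦ 1₍₋₁₎·c ⊗ 1₍₀₎a`) is isomorphic as an `A`-coring to `𝒞 = C ⊗_R A`, via
`θ` with inverse induced by the canonical projection `C ⊗ A → C ⊗_R A`.  We state: `θ`
descends to `𝒞 = (C ⊗ A)/relations`, `θ` and the projection are mutually inverse, and `θ`
is compatible with the `A`-bimodule structures, the coproducts and the counits. -/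
theorem stmt18 (k : Type*) [CommRing k] (H : Type*) [Ring H] [Algebra k H]
    (Δ : H →ₗ[k] H ⊗[k] H) (ε : H →ₗ[k] k) (S Sinv : H →ₗ[k] H)
    (C : Type*) [AddCommGroup C] [Module k C]
    (act : H →ₗ[k] C →ₗ[k] C) (ΔC : C →ₗ[k] C ⊗[k] C) (εC : C →ₗ[k] k)
    (A : Type*) [Ring A] [Algebra k A] (ρ : A →ₗ[k] H ⊗[k] A)
    (hwh : DK.IsWeakHopf k H Δ ε S)
    (hinv1 : ∀ h, Sinv (S h) = h) (hinv2 : ∀ h, S (Sinv h) = h)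
    (hC : DK.IsWeakModuleCoalgebra k H Δ ε C act ΔC εC)
    (hA : DK.IsWeakComoduleAlgebra k H Δ ε A ρ) :
    -- `(h ⊗ a₀) ⊗ (c ⊗ a) ↦ h·c ⊗ a₀a`:
    letI inn : (H ⊗[k] A) ⊗[k] (C ⊗[k] A) →ₗ[k] C ⊗[k] A :=
      TensorProduct.map (DK.evC k H C act) (LinearMap.mul' k A) ∘ₗ
        (TensorProduct.tensorTensorTensorComm k H A C A).toLinearMap
    -- the left `A`-action `a · (c ⊗ a') = a₍₋₁₎·c ⊗ a₍₀₎a'` on `C ⊗ A`: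
    letI lam : A → (C ⊗[k] A →ₗ[k] C ⊗[k] A) := fun a =>
      inn ∘ₗ TensorProduct.mk k (H ⊗[k] A) (C ⊗[k] A) (ρ a)
    -- `θ` at the level of representatives (`𝒞̃` is the range of `Φ = lam 1`):
    letI Φ : C ⊗[k] A →ₗ[k] C ⊗[k] A := lam 1
    -- balancing relations of `𝒞 = C ⊗_R A`, `R = Im Π^L`, `t_H = S⁻¹|_R`:
    letI relCA : Submodule k (C ⊗[k] A) := Submodule.span k
      {x | ∃ (g : H) (c : C) (a : A),
        x = (act (Sinv (DK.PiL k H Δ ε g)) c) ⊗ₜ[k] a -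
          c ⊗ₜ[k] (DK.sAlin k H ε A ρ g * a)}
    -- the coproduct `Δ_C ⊗ A : C ⊗ A → C ⊗ (C ⊗ A)`:
    letI D : C ⊗[k] A →ₗ[k] C ⊗[k] (C ⊗[k] A) :=
      (TensorProduct.assoc k C C A).toLinearMap ∘ₗ LinearMap.rTensor A ΔC
    -- the left action of `1 ∈ A` on `C ⊗ (C ⊗ A)`:
    -- `c ⊗ c' ⊗ a ↦ 1₍₋₂₎·c ⊗ 1₍₋₁₎·c' ⊗ 1₍₀₎a`:
    letI Lam1 : C ⊗[k] (C ⊗[k] A) →ₗ[k] C ⊗[k] (C ⊗[k] A) :=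
      (TensorProduct.map (DK.evC k H C act) inn ∘ₗ
        (TensorProduct.tensorTensorTensorComm k H (H ⊗[k] A) C (C ⊗[k] A)).toLinearMap) ∘ₗ
        TensorProduct.mk k (H ⊗[k] (H ⊗[k] A)) (C ⊗[k] (C ⊗[k] A))
          ((TensorProduct.assoc k H H A) ((LinearMap.rTensor A Δ) (ρ 1)))
    -- counits of `𝒞̃` and of `𝒞`:
    letI E0 : C ⊗[k] A →ₗ[k] A :=
      (TensorProduct.lid k A).toLinearMap ∘ₗ TensorProduct.map εC LinearMap.id
    letI E1 : C ⊗[k] A →ₗ[k] A :=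
      LinearMap.mul' k A ∘ₗ
        TensorProduct.map (DK.sAlin k H ε A ρ ∘ₗ DK.etil k H Δ C act εC) LinearMap.id
    -- (1) `θ` is well defined on `𝒞 = C ⊗_R A`:
    (∀ (g : H) (c : C) (a : A),
      Φ ((act (Sinv (DK.PiL k H Δ ε g)) c) ⊗ₜ[k] a) =
        Φ (c ⊗ₜ[k] (DK.sAlin k H ε A ρ g * a))) ∧
    -- (2) the projection `C ⊗ A → C ⊗_R A` splits `θ`:  `θ̃ ∘ θ = id_𝒞` ...
    (∀ x : C ⊗[k] A, relCA.mkQ (Φ x) = relCA.mkQ x) ∧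
    -- (3) ... and `θ ∘ θ̃ = id` on `𝒞̃ = range Φ`:
    (∀ x : C ⊗[k] A, Φ (Φ x) = Φ x) ∧
    -- (4) `θ` is a map of `A`-bimodules:
    (∀ (a : A) (x : C ⊗[k] A), Φ (lam a x) = lam a x) ∧
    (∀ (a : A) (x : C ⊗[k] A), lam a (Φ x) = lam a x) ∧
    (∀ (a' : A) (x : C ⊗[k] A),
      Φ ((LinearMap.lTensor C (LinearMap.mulRight k a')) x) =
        (LinearMap.lTensor C (LinearMap.mulRight k a')) (Φ x)) ∧
    -- (5) `θ` is comultiplicative: `Δ_𝒞̃(θ x) = (θ ⊗ θ)(Δ_𝒞 x)`: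
    (∀ x : C ⊗[k] A, D (Φ x) = Lam1 (D x)) ∧
    -- (6) `θ` is counital:
    (∀ x : C ⊗[k] A, E0 (Φ x) = E1 x) := by
  obtain ⟨⟨hΔm, hco, hcu1, hcu2, hε2, hε2', hw1, hw2⟩, hSL, hSR, hSS⟩ := hwh
  obtain ⟨hCco, hCc1, hCc2, hactm, hact1, hΔC, hεC⟩ := hC
  obtain ⟨hAco, hAcu, hAm, hAw⟩ := hA
  refine ⟨?_, ?_, ?_, ?_, ?_, ?_, ?_, ?_⟩
  · exact fun g c a =>
      DKP.part1 Δ ε S Sinv act ρ hΔm hco hcu1 hcu2 hε2' hw1 hw2 hSL hSR hSS hinv1 hinv2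
        hactm hAcu hAm hAw g c a
  · exact fun x =>
      DKP.part2 Δ ε S Sinv act ρ hco hcu2 hε2' hw1 hSL hSR hSS hinv1 hAcu hAm hAw
        (Submodule.span k
          {x | ∃ (g : H) (c : C) (a : A),
            x = (act (Sinv (DK.PiL k H Δ ε g)) c) ⊗ₜ[k] a -
              c ⊗ₜ[k] (DK.sAlin k H ε A ρ g * a)})
        (fun g c a => Submodule.subset_span ⟨g, c, a, rfl⟩) x
  · exact fun x => DKP.part3 act ρ hactm hAm x
  · exact fun a x => DKP.part4a act ρ hactm hAm a x
  · exact fun a x => DKP.part4b act ρ hactm hAm a x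
  · exact fun a' x => DKP.inn_rT act (ρ 1) x a'
  · exact fun x => DKP.part5 Δ act ΔC ρ hΔC x
  · exact fun x => DKP.part6 Δ ε act εC ρ hεC x
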